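/- arXiv:2010.06731 — 8 statements merged into one kernel-verified Lean document; each statement's English description precedes it below -/
import Mathlib

section
/- If u ≤ v in the right weak order on S_n (i.e., Inv(u) ⊆ Inv(v), where Inv(σ) is the set of pairs (j,i) with j > i and σ⁻¹(j) < σ⁻¹(i)), and I is an interval in {1,...,n}, then st(u|I) ≤ st(v|I), where u|I denotes the word obtained from the one-line notation of u by deleting letters not in I, and st denotes standardization. -/
/-- Standardization (0-based): replace each letter by its rank among the letters of `w`. -/
def stW (w : List ℕ) : List ℕ := w.map (fun x => (w.filter (· < x)).length)

/-- `w` is the one-line word of a permutation of `{0, …, n-1}` where `n = w.length`. -/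
def IsPermWord (w : List ℕ) : Prop := w.Perm (List.range w.length)

/-- The inversion set of a word: pairs `(j, i)` with `j > i` and `j` to the left of `i`. -/
def invSet (w : List ℕ) : Set (ℕ × ℕ) :=
  {p | p.2 < p.1 ∧ ∃ k l : ℕ, k < l ∧ w[k]? = some p.1 ∧ w[l]? = some p.2}

/-- The right weak order: inclusion of inversion sets. -/
def weakLe (u v : List ℕ) : Prop := invSet u ⊆ invSet v

/-- Left shifted concatenation `v △ u`: the word `v̄ u`, `v̄` being `v` shifted by `|u|`. -/
def triangle (v u : List ℕ) : List ℕ := v.map (· + u.length) ++ u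

/-- Right shifted concatenation `u □ v`: the word `u v̄`, `v̄` being `v` shifted by `|u|`. -/
def squareC (u v : List ℕ) : List ℕ := u ++ v.map (· + u.length)

/-!
An inversion of a word is a pair of letters `j > i` such that `[j, i]` is a subword. Restricting
both words to the letters of `I` keeps exactly the inversions between letters of `I`, so it
preserves the weak order. Since `u|I` and `v|I` have the same letters, standardization relabels
both by the same strictly increasing map, and such a relabelling preserves inversions.
-/

open List

theorem List.pair_sublist_iff_exists_getElem? {α : Type*} {a b : α} {w : List α} :
    [a, b] <+ w ↔ ∃ k l : ℕ, k < l ∧ w[k]? = some a ∧ w[l]? = some b := by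
  constructor
  · intro h
    obtain ⟨f, hf⟩ := sublist_iff_exists_orderEmbedding_getElem?_eq.mp h
    exact ⟨f 0, f 1, f.strictMono zero_lt_one, (hf 0).symm, (hf 1).symm⟩
  · rintro ⟨k, l, hkl, hk, hl⟩
    rw [← take_append_drop l w]
    refine Sublist.append (l₁ := [a]) (r₁ := [b]) ?_ ?_
    · rw [singleton_sublist, mem_iff_getElem?]
      exact ⟨k, by rwa [getElem?_take, if_pos hkl]⟩
    · rw [singleton_sublist, mem_iff_getElem?]
      exact ⟨0, by rwa [getElem?_drop, Nat.add_zero]⟩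

theorem mem_invSet_iff {w : List ℕ} {j i : ℕ} : (j, i) ∈ invSet w ↔ i < j ∧ [j, i] <+ w := by
  rw [pair_sublist_iff_exists_getElem?]
  rfl

theorem weakLe.filter {u v : List ℕ} (h : weakLe u v) (p : ℕ → Bool) :
    weakLe (u.filter p) (v.filter p) := by
  rintro ⟨j, i⟩ hji
  obtain ⟨hij, hsub⟩ := mem_invSet_iff.mp hji
  have hp : ∀ x ∈ [j, i], p x := fun x hx => (mem_filter.mp (hsub.subset hx)).2
  obtain ⟨-, hsub_v⟩ := mem_invSet_iff.mp (h (mem_invSet_iff.mpr ⟨hij, hsub.trans filter_sublist⟩))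
  refine mem_invSet_iff.mpr ⟨hij, ?_⟩
  simpa [filter_eq_self.mpr hp] using hsub_v.filter p

theorem weakLe.map {u v : List ℕ} (h : weakLe u v) {f : ℕ → ℕ}
    (hf : StrictMonoOn f {x | x ∈ u}) : weakLe (u.map f) (v.map f) := by
  rintro ⟨b, a⟩ hab
  obtain ⟨hlt, hsub⟩ := mem_invSet_iff.mp hab
  obtain ⟨l, hl, hl_map⟩ := sublist_map_iff.mp hsub
  rcases l with _ | ⟨y, _ | ⟨x, _ | _⟩⟩ <;> simp only [map_cons, map_nil, cons.injEq,
    reduceCtorEq, and_false, and_true] at hl_map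
  obtain ⟨rfl, rfl⟩ := hl_map
  have hxy : x < y := (hf.lt_iff_lt (hl.subset (by simp)) (hl.subset (by simp))).mp hlt
  obtain ⟨-, hsub_v⟩ := mem_invSet_iff.mp (h (mem_invSet_iff.mpr ⟨hxy, hl⟩))
  exact mem_invSet_iff.mpr ⟨hlt, by simpa using hsub_v.map f⟩

theorem List.strictMonoOn_length_filter_lt {α : Type*} [Preorder α] [DecidableLT α]
    (L : List α) : StrictMonoOn (fun x => (L.filter (· < x)).length) {x | x ∈ L} := by
  intro a ha b _ hab
  have hsub : L.filter (· < a) <+ L.filter (· < b) :=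
    monotone_filter_right L fun x hx => by simpa using (by simpa using hx : x < a).trans hab
  refine hsub.length_le.lt_of_ne fun hlen => ?_
  have : a ∈ L.filter (· < a) := (hsub.eq_of_length hlen) ▸ mem_filter.mpr ⟨ha, by simpa using hab⟩
  simp at this

theorem stW_eq_map_of_perm {w w' : List ℕ} (h : w.Perm w') :
    stW w = w.map (fun x => (w'.filter (· < x)).length) :=
  map_congr_left fun _ _ => (h.filter _).length_eq

theorem st_restrict_mono_weakLe_general (n : ℕ) (u v : List ℕ)
    (hu : IsPermWord u) (hv : IsPermWord v)
    (hun : u.length = n) (hvn : v.length = n)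
    (I : Finset ℕ)
    (huv : weakLe u v) :
    weakLe (stW (u.filter (· ∈ I))) (stW (v.filter (· ∈ I))) := by
  have hperm : (v.filter (· ∈ I)).Perm (u.filter (· ∈ I)) := by
    refine (hv.trans ?_).filter _
    rw [hvn, ← hun]
    exact hu.symm
  rw [stW_eq_map_of_perm hperm, stW]
  exact (huv.filter _).map (strictMonoOn_length_filter_lt _)

/-- If `u ≤ v` in the right weak order on `S_n` and `I` is an
interval in `{0,…,n-1}`, then `st(u|I) ≤ st(v|I)`. -/
theorem st_restrict_mono_weakLe (n : ℕ) (u v : List ℕ)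
    (hu : IsPermWord u) (hv : IsPermWord v)
    (hun : u.length = n) (hvn : v.length = n)
    (I : Finset ℕ) (hIn : I ⊆ Finset.range n)
    (hI : ∀ a b c : ℕ, a ∈ I → c ∈ I → a ≤ b → b ≤ c → b ∈ I)
    (huv : weakLe u v) :
    weakLe (stW (u.filter (· ∈ I))) (stW (v.filter (· ∈ I))) :=
  st_restrict_mono_weakLe_general n u v hu hv hun hvn I huv
end

section
/- The left shifted concatenation product is compatible with the right weak order: if u ≤ u' in S_p and v ≤ v' in S_q, then v △ u ≤ v' △ u' in S_{p+q}, where v △ u is the concatenation of the word v̄ (obtained by adding p to each letter of v) with the word u. -/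
private lemma permWord_mem_iff {w : List ℕ} (h : IsPermWord w) {x : ℕ} :
    x ∈ w ↔ x < w.length := by
  rw [h.mem_iff, List.mem_range]

private lemma triangle_getElem?_left (v u : List ℕ) {k : ℕ} (hk : k < v.length) :
    (triangle v u)[k]? = some (v[k] + u.length) := by
  rw [triangle, List.getElem?_append_left (by simpa using hk), List.getElem?_map,
    List.getElem?_eq_getElem hk]
  rfl

private lemma triangle_getElem?_right (v u : List ℕ) {k : ℕ} (hk : v.length ≤ k) :
    (triangle v u)[k]? = u[k - v.length]? := by
  rw [triangle, List.getElem?_append_right (by simpa using hk)]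
  simp

/-- The left shifted concatenation is compatible with the right
weak order: `u ≤ u'` and `v ≤ v'` imply `v △ u ≤ v' △ u'`. -/
theorem triangle_mono_weakLe (p q : ℕ) (u u' v v' : List ℕ)
    (hu : IsPermWord u) (hu' : IsPermWord u') (hv : IsPermWord v) (hv' : IsPermWord v')
    (hup : u.length = p) (hu'p : u'.length = p)
    (hvq : v.length = q) (hv'q : v'.length = q)
    (h1 : weakLe u u') (h2 : weakLe v v') :
    weakLe (triangle v u) (triangle v' u') := by
  rintro ⟨j, i⟩ ⟨hij, k, l, hkl, hk, hl⟩
  refine ⟨hij, ?_⟩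
  simp only at hij
  by_cases hlv : l < v.length
  · -- both letters in the shifted `v` part
    have hkv : k < v.length := lt_trans hkl hlv
    rw [triangle_getElem?_left v u hkv] at hk
    rw [triangle_getElem?_left v u hlv] at hl
    have hj : j = v[k] + u.length := by exact (Option.some_inj.mp hk).symm
    have hi : i = v[l] + u.length := by exact (Option.some_inj.mp hl).symm
    have hmem : (v[k], v[l]) ∈ invSet v :=
      ⟨by simp; omega, k, l, hkl, List.getElem?_eq_getElem hkv, List.getElem?_eq_getElem hlv⟩
    obtain ⟨hij', k', l', hkl', hk', hl'⟩ := h2 hmem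
    obtain ⟨hk'len, hk'eq⟩ := List.getElem?_eq_some_iff.mp hk'
    obtain ⟨hl'len, hl'eq⟩ := List.getElem?_eq_some_iff.mp hl'
    refine ⟨k', l', hkl', ?_, ?_⟩
    · rw [triangle_getElem?_left v' u' hk'len, hk'eq, hj, hup, hu'p]
    · rw [triangle_getElem?_left v' u' hl'len, hl'eq, hi, hup, hu'p]
  · push_neg at hlv
    by_cases hkv : k < v.length
    · -- cross case: `j` in the shifted part, `i` in `u`
      rw [triangle_getElem?_left v u hkv] at hk
      rw [triangle_getElem?_right v u hlv] at hl
      have hj : j = v[k] + u.length := (Option.some_inj.mp hk).symm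
      have hvk : v[k] < v.length := (permWord_mem_iff hv).mp (List.getElem_mem hkv)
      have hi : i < u.length := by
        have : i ∈ u := List.mem_iff_getElem?.mpr ⟨l - v.length, hl⟩
        exact (permWord_mem_iff hu).mp this
      have hjv' : v[k] ∈ v' := (permWord_mem_iff hv').mpr (by omega)
      obtain ⟨k', hk'⟩ := List.mem_iff_getElem?.mp hjv'
      have hiu' : i ∈ u' := (permWord_mem_iff hu').mpr (by omega)
      obtain ⟨m, hm⟩ := List.mem_iff_getElem?.mp hiu'
      obtain ⟨hk'len, hk'eq⟩ := List.getElem?_eq_some_iff.mp hk'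
      refine ⟨k', v'.length + m, by omega, ?_, ?_⟩
      · rw [triangle_getElem?_left v' u' hk'len, hk'eq, hj, hup, hu'p]
      · rw [triangle_getElem?_right v' u' (Nat.le_add_right _ _)]
        simpa using hm
    · -- both letters in `u`
      push_neg at hkv
      rw [triangle_getElem?_right v u hkv] at hk
      rw [triangle_getElem?_right v u hlv] at hl
      have hmem : (j, i) ∈ invSet u :=
        ⟨hij, k - v.length, l - v.length, by omega, hk, hl⟩
      obtain ⟨_, m, m', hmm', hm, hm'⟩ := h1 hmem
      refine ⟨v'.length + m, v'.length + m', by omega, ?_, ?_⟩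
      · rw [triangle_getElem?_right v' u' (Nat.le_add_right _ _)]; simpa using hm
      · rw [triangle_getElem?_right v' u' (Nat.le_add_right _ _)]; simpa using hm'
end

section
/- The monoid of all permutations S = ⋃_{n≥0} S_n under right shifted concatenation □ is a free monoid, freely generated by the indecomposable permutations (those that cannot be written as u □ v with u, v nonempty). Equivalently, every permutation factors uniquely as a □-product of indecomposable permutations. -/
/-- A nonempty permutation word is `□`-indecomposable. -/
def SqIndec (w : List ℕ) : Prop :=
  IsPermWord w ∧ w ≠ [] ∧
    ∀ u v : List ℕ, IsPermWord u → IsPermWord v → w = squareC u v → u = [] ∨ v = []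

lemma isPermWord_nil : IsPermWord [] := by simp [IsPermWord]

lemma squareC_length (u v : List ℕ) : (squareC u v).length = u.length + v.length := by
  simp [squareC]

lemma isPermWord_squareC {u v : List ℕ} (hu : IsPermWord u) (hv : IsPermWord v) :
    IsPermWord (squareC u v) := by
  unfold IsPermWord at *
  rw [squareC_length, List.range_add]
  have := hv.map (fun x => x + u.length)
  have h2 : (v.map (fun x => x + u.length)).Perm
      ((List.range v.length).map (fun x => u.length + x)) := by
    refine this.trans ?_
    rw [List.map_congr_left (g := fun x => u.length + x) (fun a _ => Nat.add_comm a u.length)]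
  exact (hu.append h2)

/-- Splitting lemma: if a perm word has a perm-word prefix, the remainder is a shifted
perm word. -/
lemma split_perm {w u x : List ℕ} (hw : IsPermWord w) (hu : IsPermWord u)
    (hwx : w = u ++ x) :
    ∃ v : List ℕ, IsPermWord v ∧ w = squareC u v ∧ v.length = x.length := by
  have hxp : x.Perm ((List.range x.length).map (fun k => u.length + k)) := by
    have hw' : (u ++ x).Perm
        (List.range u.length ++ (List.range x.length).map (fun k => u.length + k)) := by
      have h0 := hw
      unfold IsPermWord at h0
      rw [hwx] at h0
      rwa [List.length_append, List.range_add] at h0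
    have hmul : (↑u + ↑x : Multiset ℕ) =
        (↑(List.range u.length) + ↑((List.range x.length).map (fun k => u.length + k))
          : Multiset ℕ) := by
      rw [Multiset.coe_add, Multiset.coe_add]
      exact Multiset.coe_eq_coe.mpr hw'
    have hu' : (↑u : Multiset ℕ) = ↑(List.range u.length) := Multiset.coe_eq_coe.mpr hu
    rw [hu'] at hmul
    exact Multiset.coe_eq_coe.mp (add_left_cancel hmul)
  have hle : ∀ y ∈ x, u.length ≤ y := by
    intro y hy
    have := hxp.mem_iff.mp hy
    simp only [List.mem_map] at this
    obtain ⟨k, _, rfl⟩ := this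
    exact Nat.le_add_right _ _
  have hxmap : (x.map (fun y => y - u.length)).map (fun y => y + u.length) = x := by
    rw [List.map_map]
    have h1 : ∀ a ∈ x, ((fun y => y + u.length) ∘ (fun y => y - u.length)) a = id a :=
      fun a ha => by simp [Nat.sub_add_cancel (hle a ha)]
    rw [List.map_congr_left h1, List.map_id]
  refine ⟨x.map (fun y => y - u.length), ?_, ?_, by simp⟩
  · unfold IsPermWord
    rw [List.length_map]
    have h2 := hxp.map (fun y => y - u.length)
    rw [List.map_map] at h2
    refine h2.trans ?_
    have h3 : ∀ a ∈ List.range x.length,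
        ((fun y => y - u.length) ∘ (fun k => u.length + k)) a = id a := fun a _ => by simp
    rw [List.map_congr_left h3, List.map_id]
  · rw [hwx, squareC, hxmap]

lemma foldr_perm {L : List (List ℕ)} (h : ∀ x ∈ L, IsPermWord x) :
    IsPermWord (L.foldr squareC []) := by
  induction L with
  | nil => exact isPermWord_nil
  | cons a L ih =>
      exact isPermWord_squareC (h a (by simp)) (ih (fun x hx => h x (by simp [hx])))

/-- Heads of two decompositions with indecomposable heads agree (ordered case). -/
lemma head_eq_aux {u u' v v' : List ℕ} (hu : SqIndec u) (hu' : SqIndec u')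
    (hv : IsPermWord v) (hv' : IsPermWord v')
    (heq : squareC u v = squareC u' v') (hle : u.length ≤ u'.length) : u = u' := by
  have hpre : u <+: u' := by
    have h1 : u <+: squareC u v := ⟨v.map (fun y => y + u.length), rfl⟩
    have h2 : u' <+: squareC u' v' := ⟨v'.map (fun y => y + u'.length), rfl⟩
    rw [← heq] at h2
    exact List.prefix_of_prefix_length_le h1 h2 hle
  obtain ⟨t, ht⟩ := hpre
  obtain ⟨m, hm, hsq, hml⟩ := split_perm hu'.1 hu.1 ht.symm
  rcases hu'.2.2 u m hu.1 hm hsq with h | h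
  · exact absurd h hu.2.1
  · subst h
    simpa [squareC] using hsq.symm

lemma head_eq {u u' v v' : List ℕ} (hu : SqIndec u) (hu' : SqIndec u')
    (hv : IsPermWord v) (hv' : IsPermWord v')
    (heq : squareC u v = squareC u' v') : u = u' ∧ v = v' := by
  have huu : u = u' := by
    rcases le_total u.length u'.length with h | h
    · exact head_eq_aux hu hu' hv hv' heq h
    · exact (head_eq_aux hu' hu hv' hv heq.symm h).symm
  refine ⟨huu, ?_⟩
  subst huu
  have := List.append_cancel_left (heq)
  have hinj : Function.Injective (fun y : ℕ => y + u.length) :=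
    fun a b h => by simpa using h
  exact List.map_injective_iff.mpr hinj this

lemma fact_unique : ∀ L M : List (List ℕ), (∀ x ∈ L, SqIndec x) → (∀ x ∈ M, SqIndec x) →
    L.foldr squareC [] = M.foldr squareC [] → L = M := by
  intro L
  induction L with
  | nil =>
      intro M _ hM h
      cases M with
      | nil => rfl
      | cons b M =>
          exfalso
          have hb : b ≠ [] := (hM b (by simp)).2.1
          have hbpos : 0 < b.length := List.length_pos_iff.mpr hb
          have hlen := congrArg List.length h
          simp only [List.foldr_nil, List.foldr_cons, List.length_nil, squareC_length] at hlen
          omega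
  | cons a L ih =>
      intro M hL hM h
      cases M with
      | nil =>
          exfalso
          have ha : a ≠ [] := (hL a (by simp)).2.1
          have hapos : 0 < a.length := List.length_pos_iff.mpr ha
          have hlen := congrArg List.length h
          simp only [List.foldr_nil, List.foldr_cons, List.length_nil, squareC_length] at hlen
          omega
      | cons b M =>
          have hvL : IsPermWord (L.foldr squareC []) :=
            foldr_perm (fun x hx => (hL x (by simp [hx])).1)
          have hvM : IsPermWord (M.foldr squareC []) :=
            foldr_perm (fun x hx => (hM x (by simp [hx])).1)
          obtain ⟨h1, h2⟩ := head_eq (hL a (by simp)) (hM b (by simp)) hvL hvM h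
          rw [h1, ih M (fun x hx => hL x (by simp [hx])) (fun x hx => hM x (by simp [hx])) h2]

lemma exists_fact : ∀ n (w : List ℕ), w.length = n → IsPermWord w →
    ∃ L : List (List ℕ), (∀ x ∈ L, SqIndec x) ∧ L.foldr squareC [] = w := by
  intro n
  induction n using Nat.strong_induction_on with
  | _ n ih =>
      intro w hlen hw
      rcases eq_or_ne w [] with rfl | hne
      · exact ⟨[], by simp, rfl⟩
      · classical
        have hex : ∃ p, 0 < p ∧ p ≤ w.length ∧ IsPermWord (w.take p) :=
          ⟨w.length, List.length_pos_iff.mpr hne, le_refl _, by simpa using hw⟩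
        let p := Nat.find hex
        obtain ⟨hp0, hpw, hperm⟩ : 0 < p ∧ p ≤ w.length ∧ IsPermWord (w.take p) :=
          Nat.find_spec hex
        set u := w.take p with hu_def
        have hul : u.length = p := by
          rw [hu_def, List.length_take]; exact min_eq_left hpw
        -- u is indecomposable
        have huind : SqIndec u := by
          refine ⟨hperm, ?_, ?_⟩
          · intro h
            rw [h] at hul
            simp at hul
            omega
          · intro a b ha hb hab
            by_contra hcon
            push_neg at hcon
            obtain ⟨ha0, hb0⟩ := hcon
            have hal : 0 < a.length := List.length_pos_iff.mpr ha0
            have hbl : 0 < b.length := List.length_pos_iff.mpr hb0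
            have hablen : a.length + b.length = p := by
              rw [← squareC_length, ← hab, hul]
            have halt : a.length < p := by omega
            have hta : w.take a.length = a := by
              have h1 : u.take a.length = a := by
                rw [hab]
                exact List.take_left' rfl
              rw [hu_def, List.take_take, min_eq_left halt.le] at h1
              exact h1
            have hlt : a.length < Nat.find hex := halt
            have hns := Nat.find_min hex hlt
            push_neg at hns
            rw [← hta] at ha
            exact hns hal (by omega) ha
        -- split off
        have hsplit : w = u ++ w.drop p := by rw [hu_def, List.take_append_drop]
        obtain ⟨v, hv, hwsq, hvl⟩ := split_perm hw hperm hsplit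
        have hvlen : v.length < n := by
          rw [hvl, List.length_drop, ← hlen]
          have : 0 < w.length := List.length_pos_iff.mpr hne
          omega
        obtain ⟨L, hL1, hL2⟩ := ih v.length hvlen v rfl hv
        refine ⟨u :: L, ?_, ?_⟩
        · intro x hx
          rcases List.mem_cons.mp hx with rfl | hx
          · exact huind
          · exact hL1 x hx
        · rw [List.foldr_cons, hL2, ← hwsq]

/-- `(S, □)` is a free monoid, freely generated by the
`□`-indecomposable permutations: every permutation factors uniquely as a
`□`-product of indecomposables. -/
theorem squareC_free_monoid (σ : List ℕ) (hσ : IsPermWord σ) :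
    ∃! L : List (List ℕ), (∀ x ∈ L, SqIndec x) ∧ L.foldr squareC [] = σ := by
  obtain ⟨L, hL1, hL2⟩ := exists_fact σ.length σ rfl hσ
  refine ⟨L, ⟨hL1, hL2⟩, ?_⟩
  rintro M ⟨hM1, hM2⟩
  exact fact_unique M L hM1 hL1 (hM2.trans hL2.symm)
end

section
/- Let n = p + q, σ ∈ S_n, a = σ|{1,...,p} (viewed as a permutation in S_p) and b = st(σ|{p+1,...,n}) ∈ S_q. Then for any u ∈ S_p and v ∈ S_q: σ ≤ v △ u in the right weak order if and only if a ≤ u and b ≤ v. -/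
/-!
The inversions of `v △ u` are those of the shifted copy of `v` (both letters `≥ p`), those of `u`
(both letters `< p`), and every pair `(j, i)` with `j ≥ p > i`. Sorting an inversion of `σ` by
where its two letters fall shows that it lies in `Inv (v △ u)` iff it is an inversion of
`σ|{<p}` lying in `Inv u`, an inversion of `σ|{≥p}` lying in `Inv v` shifted by `p`, or a
mixed pair, which lies there automatically. Standardizing `σ|{≥p}` is just the shift by `-p`,
and a strictly monotone relabelling of the letters does not change the weak order.
-/
open List

namespace List

variable {α : Type*}

theorem pair_sublist_iff_getElem? {l : List α} {a b : α} :
    [a, b] <+ l ↔ ∃ k m : ℕ, k < m ∧ l[k]? = some a ∧ l[m]? = some b := by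
  constructor
  · intro h
    obtain ⟨is, heq, hp⟩ := sublist_eq_map_getElem h
    match is, heq, hp with
    | [k, m], heq, hp =>
      simp only [map_cons, map_nil, cons.injEq, and_true] at heq
      simp only [pairwise_cons, mem_singleton, forall_eq] at hp
      exact ⟨k, m, hp.1, by simp [heq.1], by simp [heq.2]⟩
  · rintro ⟨k, m, hkm, hk, hm⟩
    obtain ⟨hk', rfl⟩ := getElem?_eq_some_iff.mp hk
    obtain ⟨hm', rfl⟩ := getElem?_eq_some_iff.mp hm
    simpa using map_getElem_sublist (l := l) (is := [⟨k, hk'⟩, ⟨m, hm'⟩]) (by simpa using hkm)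

theorem sublist_filter_iff_of_forall {l₁ l₂ : List α} {p : α → Bool} :
    l₁ <+ l₂.filter p ↔ l₁ <+ l₂ ∧ ∀ x ∈ l₁, p x := by
  refine ⟨fun h => ⟨h.trans filter_sublist, fun x hx => (mem_filter.mp (h.subset hx)).2⟩, ?_⟩
  rintro ⟨h, hp⟩
  simpa [filter_eq_self.mpr hp] using h.filter p

theorem pair_sublist_append_iff {l₁ l₂ : List α} {a b : α} :
    [a, b] <+ l₁ ++ l₂ ↔ [a, b] <+ l₁ ∨ [a, b] <+ l₂ ∨ (a ∈ l₁ ∧ b ∈ l₂) := by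
  rw [sublist_append_iff]
  constructor
  · rintro ⟨r₁, r₂, heq, h₁, h₂⟩
    rcases r₁ with _ | ⟨x, _ | ⟨y, _ | ⟨z, r⟩⟩⟩ <;> aesop
  · rintro (h | h | ⟨ha, hb⟩)
    · exact ⟨[a, b], [], by simp, h, nil_sublist _⟩
    · exact ⟨[], [a, b], rfl, nil_sublist _, h⟩
    · exact ⟨[a], [b], rfl, singleton_sublist.mpr ha, singleton_sublist.mpr hb⟩

theorem pair_sublist_map_iff {β : Type*} {f : α → β} {l : List α} {c d : β} :
    [c, d] <+ l.map f ↔ ∃ a b, [a, b] <+ l ∧ f a = c ∧ f b = d := by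
  rw [sublist_map_iff]
  constructor
  · rintro ⟨l', h, heq⟩
    match l', heq with
    | [a, b], heq =>
      obtain ⟨rfl, rfl⟩ : c = f a ∧ d = f b := by simpa using heq
      exact ⟨a, b, h, rfl, rfl⟩
  · rintro ⟨a, b, h, rfl, rfl⟩
    exact ⟨[a, b], h, rfl⟩

end List

theorem mem_invSet {w : List ℕ} {x : ℕ × ℕ} : x ∈ invSet w ↔ x.2 < x.1 ∧ [x.1, x.2] <+ w :=
  and_congr_right' pair_sublist_iff_getElem?.symm

theorem mem_invSet_filter {w : List ℕ} {P : ℕ → Bool} {x : ℕ × ℕ} :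
    x ∈ invSet (w.filter P) ↔ x ∈ invSet w ∧ P x.1 ∧ P x.2 := by
  simp only [mem_invSet, sublist_filter_iff_of_forall, mem_cons, not_mem_nil, forall_eq_or_imp,
    or_false, forall_eq, and_assoc]

theorem mem_invSet_append {w₁ w₂ : List ℕ} {x : ℕ × ℕ} :
    x ∈ invSet (w₁ ++ w₂) ↔
      x ∈ invSet w₁ ∨ x ∈ invSet w₂ ∨ (x.2 < x.1 ∧ x.1 ∈ w₁ ∧ x.2 ∈ w₂) := by
  simp only [mem_invSet, pair_sublist_append_iff, ← and_or_left]

theorem invSet_map {f : ℕ → ℕ} (hf : StrictMono f) (w : List ℕ) :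
    invSet (w.map f) = Prod.map f f '' invSet w := by
  ext ⟨c, d⟩
  simp only [mem_invSet, pair_sublist_map_iff, Set.mem_image, Prod.exists, Prod.map, Prod.mk.injEq]
  constructor
  · rintro ⟨hdc, a, b, h, rfl, rfl⟩
    exact ⟨a, b, ⟨hf.lt_iff_lt.mp hdc, h⟩, rfl, rfl⟩
  · rintro ⟨a, b, ⟨hba, h⟩, rfl, rfl⟩
    exact ⟨hf hba, a, b, h, rfl, rfl⟩

theorem weakLe_map_iff {f : ℕ → ℕ} (hf : StrictMono f) {w w' : List ℕ} :
    weakLe (w.map f) (w'.map f) ↔ weakLe w w' := by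
  simp only [weakLe, invSet_map hf]
  exact Set.image_subset_image_iff (hf.injective.prodMap hf.injective)

theorem fst_mem_of_mem_invSet {w : List ℕ} {x : ℕ × ℕ} (hx : x ∈ invSet w) : x.1 ∈ w :=
  (mem_invSet.mp hx).2.subset (mem_cons_self ..)

theorem snd_mem_of_mem_invSet {w : List ℕ} {x : ℕ × ℕ} (hx : x ∈ invSet w) : x.2 ∈ w :=
  (mem_invSet.mp hx).2.subset (by simp)

theorem weakLe_append_iff {σ w₁ w₂ : List ℕ} {p : ℕ} (h₁ : ∀ x ∈ w₁, p ≤ x)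
    (h₂ : ∀ x ∈ w₂, x < p) (hσ : σ ⊆ w₁ ++ w₂) :
    weakLe σ (w₁ ++ w₂) ↔ weakLe (σ.filter (· < p)) w₂ ∧ weakLe (σ.filter (p ≤ ·)) w₁ := by
  simp only [weakLe, Set.subset_def, mem_invSet_filter, mem_invSet_append, decide_eq_true_eq]
  constructor
  · intro h
    refine ⟨fun x ⟨hx, hx₁, _⟩ => ?_, fun x ⟨hx, _, hx₂⟩ => ?_⟩
    · rcases h x hx with hA | hB | ⟨_, hA, _⟩
      · exact absurd (h₁ _ (fst_mem_of_mem_invSet hA)) (not_le.mpr hx₁)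
      · exact hB
      · exact absurd (h₁ _ hA) (not_le.mpr hx₁)
    · rcases h x hx with hA | hB | ⟨_, _, hB⟩
      · exact hA
      · exact absurd (h₂ _ (snd_mem_of_mem_invSet hB)) (not_lt.mpr hx₂)
      · exact absurd (h₂ _ hB) (not_lt.mpr hx₂)
  · rintro ⟨hlow, hhigh⟩ x hx
    have hlt := (mem_invSet.mp hx).1
    have mem₁ : ∀ y ∈ σ, p ≤ y → y ∈ w₁ := fun y hy hpy =>
      (mem_append.mp (hσ hy)).resolve_right fun hy₂ => (h₂ y hy₂).not_ge hpy
    have mem₂ : ∀ y ∈ σ, y < p → y ∈ w₂ := fun y hy hyp =>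
      (mem_append.mp (hσ hy)).resolve_left fun hy₁ => (h₁ y hy₁).not_gt hyp
    by_cases hx₁ : x.1 < p
    · exact Or.inr (Or.inl (hlow x ⟨hx, hx₁, hlt.trans hx₁⟩))
    by_cases hx₂ : x.2 < p
    · exact Or.inr (Or.inr ⟨hlt, mem₁ _ (fst_mem_of_mem_invSet hx) (not_lt.mp hx₁),
        mem₂ _ (snd_mem_of_mem_invSet hx) hx₂⟩)
    · exact Or.inl (hhigh x ⟨hx, not_lt.mp hx₁, not_lt.mp hx₂⟩)

theorem countP_range_mem_Ico (p x n : ℕ) :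
    (range n).countP (fun y => decide (y < x) && decide (p ≤ y)) = min x n - p := by
  induction n with
  | zero => simp
  | succ n ih =>
    rw [range_succ, countP_append, ih]
    by_cases h1 : p ≤ n <;> by_cases h2 : n < x <;> simp [h1, h2] <;> omega

theorem map_add_stW_filter_le {σ : List ℕ} (hσ : IsPermWord σ) (p : ℕ) :
    (stW (σ.filter (p ≤ ·))).map (· + p) = σ.filter (p ≤ ·) := by
  rw [stW, map_map]
  refine (map_congr_left fun x hx => ?_).trans (map_id _)
  obtain ⟨hxσ, hpx⟩ := mem_filter.mp hx
  have hxn : x < σ.length := by simpa using hσ.mem_iff.mp hxσ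
  rw [Function.comp_apply, ← countP_eq_length_filter, countP_filter, hσ.countP_eq,
    countP_range_mem_Ico]
  simp only [decide_eq_true_eq] at hpx
  simp only [id_eq]
  omega

/-- Let `n = p + q`, `σ ∈ S_n`, `a = σ|{0,…,p-1}` and
`b = st(σ|{p,…,n-1})`.  Then for `u ∈ S_p`, `v ∈ S_q`:
`σ ≤ v △ u` in the right weak order iff `a ≤ u` and `b ≤ v`. -/
theorem weakLe_triangle_iff (p q : ℕ) (σ u v : List ℕ)
    (hσ : IsPermWord σ) (hu : IsPermWord u) (hv : IsPermWord v)
    (hσn : σ.length = p + q) (hup : u.length = p) (hvq : v.length = q) :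
    weakLe σ (triangle v u) ↔
      weakLe (σ.filter (· < p)) u ∧ weakLe (stW (σ.filter (fun x => p ≤ x))) v := by
  have mem_u : ∀ x, x ∈ u ↔ x < p := fun x => by rw [hu.mem_iff, hup, mem_range]
  have mem_v : ∀ x, x ∈ v ↔ x < q := fun x => by rw [hv.mem_iff, hvq, mem_range]
  have hσ_sub : σ ⊆ v.map (· + p) ++ u := fun x hx => by
    have : x < p + q := by simpa [hσn] using hσ.mem_iff.mp hx
    by_cases hxp : x < p
    · exact mem_append_right _ ((mem_u x).mpr hxp)
    · exact mem_append_left _ (mem_map.mpr ⟨x - p, (mem_v _).mpr (by omega), by omega⟩)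
  have weakLe_high_iff : weakLe (σ.filter (p ≤ ·)) (v.map (· + p)) ↔
      weakLe (stW (σ.filter (p ≤ ·))) v := by
    rw [← weakLe_map_iff (w := stW _) add_left_strictMono, map_add_stW_filter_le hσ]
  rw [triangle, hup, weakLe_append_iff (by simp) (fun x => (mem_u x).mp) hσ_sub, weakLe_high_iff]
end

section
/- A permutation σ ∈ S_n is indecomposable for the left shifted concatenation △ if and only if it has no global descent, where a global descent is a position i ∈ {1,...,n−1} such that σ(j) > σ(k) for all j ≤ i and all k > i. Moreover, if σ = σ_1 △ ⋯ △ σ_k with each σ_i △-indecomposable, then the global descents of σ are exactly |σ_1|, |σ_1|+|σ_2|, ..., |σ_1|+⋯+|σ_{k−1}|. -/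
/-- `i` is a global descent of `σ` (0-based: a cut position `0 < i < |σ|` such that
every letter strictly before position `i` exceeds every letter from position `i` on). -/
def GlobalDescent (σ : List ℕ) (i : ℕ) : Prop :=
  0 < i ∧ i < σ.length ∧
    ∀ j k : ℕ, j < i → i ≤ k → k < σ.length → σ.getD k 0 < σ.getD j 0

/-- A nonempty permutation word is `△`-indecomposable. -/
def TriIndec (w : List ℕ) : Prop :=
  IsPermWord w ∧ w ≠ [] ∧
    ∀ u v : List ℕ, IsPermWord u → IsPermWord v → w = triangle v u → u = [] ∨ v = []

/-! A global descent at `i` means that the first `i` letters of `σ` are exactly its `i` largest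
ones, i.e. `σ = v △ u` with `|v| = i`; conversely `|v|` is always a global descent of `v △ u`
when both factors are nonempty. Since every letter of `v̄` exceeds every letter of `u`, the other
global descents of `v △ u` are those of `v` and those of `u` shifted by `|v|`. Peeling off
`σ₁ △ (σ₂ △ ⋯)` one factor at a time then yields the partial sums. -/

lemma isPermWord_iff {w : List ℕ} : IsPermWord w ↔ w.Nodup ∧ ∀ x ∈ w, x < w.length := by
  refine ⟨fun h => ⟨h.nodup_iff.mpr List.nodup_range, fun x hx => by simpa using h.mem_iff.mp hx⟩,
    fun ⟨hnd, hlt⟩ => ?_⟩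
  exact (hnd.subperm fun x hx => List.mem_range.mpr (hlt x hx)).perm_of_length_le (by simp)

lemma IsPermWord.lt_length {w : List ℕ} (h : IsPermWord w) {x : ℕ} (hx : x ∈ w) : x < w.length :=
  (isPermWord_iff.mp h).2 x hx

lemma length_triangle (v u : List ℕ) : (triangle v u).length = v.length + u.length := by
  simp [triangle]

lemma isPermWord_triangle {u v : List ℕ} (hu : IsPermWord u) (hv : IsPermWord v) :
    IsPermWord (triangle v u) := by
  rw [IsPermWord, length_triangle, triangle, Nat.add_comm, List.range_add]
  refine ((hv.map _).append hu).trans (List.perm_append_comm.trans ?_)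
  simp only [Nat.add_comm u.length, List.Perm.refl]

lemma globalDescent_iff_take_drop {σ : List ℕ} {i : ℕ} :
    GlobalDescent σ i ↔
      0 < i ∧ i < σ.length ∧ ∀ a ∈ σ.take i, ∀ b ∈ σ.drop i, b < a := by
  simp only [GlobalDescent, List.mem_iff_getElem, List.length_take, List.length_drop,
    List.getElem_take, List.getElem_drop]
  refine and_congr_right fun _ => and_congr_right fun hi => ⟨?_, ?_⟩
  · rintro h _ ⟨j, hj, rfl⟩ _ ⟨k, hk, rfl⟩
    have := h j (i + k) (by omega) (by omega) (by omega)
    rwa [List.getD_eq_getElem _ _ (by omega), List.getD_eq_getElem _ _ (by omega)] at this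
  · intro h j k hj hik hk
    rw [List.getD_eq_getElem _ _ hk, List.getD_eq_getElem _ _ (by omega)]
    exact h _ ⟨j, by omega, rfl⟩ _ ⟨k - i, by omega, by simp [Nat.add_sub_cancel' hik]⟩

lemma IsPermWord.lt_add_length {u : List ℕ} (hu : IsPermWord u) {x : ℕ} (hx : x ∈ u) (a : ℕ) :
    x < a + u.length := by
  have := hu.lt_length hx; omega

lemma globalDescent_triangle_of_lt {u : List ℕ} (hu : IsPermWord u) {v : List ℕ} {i : ℕ}
    (hi : i < v.length) : GlobalDescent (triangle v u) i ↔ GlobalDescent v i := by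
  have hv : i ≤ (v.map (· + u.length)).length := by rw [List.length_map]; omega
  rw [globalDescent_iff_take_drop, globalDescent_iff_take_drop, length_triangle, triangle,
    List.take_append_of_le_length hv, List.drop_append_of_le_length hv, ← List.map_take,
    ← List.map_drop]
  simp only [List.forall_mem_map, List.forall_mem_append, add_lt_add_iff_right]
  exact and_congr_right fun _ => and_congr ⟨fun _ => hi, fun _ => by omega⟩
    (forall₂_congr fun a _ => and_iff_left fun _ hx => hu.lt_add_length hx a)

lemma globalDescent_triangle_length_add {u : List ℕ} (hu : IsPermWord u) (v : List ℕ) (j : ℕ) :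
    GlobalDescent (triangle v u) (v.length + j) ↔
      0 < v.length + j ∧ j < u.length ∧ ∀ a ∈ u.take j, ∀ b ∈ u.drop j, b < a := by
  have htake := List.take_length_add_append (l₁ := v.map (· + u.length)) (l₂ := u) j
  have hdrop := List.drop_length_add_append (l₁ := v.map (· + u.length)) (l₂ := u) j
  rw [List.length_map] at htake hdrop
  rw [globalDescent_iff_take_drop, length_triangle, triangle, htake, hdrop, List.forall_mem_append,
    List.forall_mem_map, Nat.add_lt_add_iff_left]
  exact and_congr_right fun _ => and_congr_right fun _ =>
    and_iff_right fun _ _ _ hb => hu.lt_add_length (List.mem_of_mem_drop hb) _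

lemma globalDescent_triangle_iff {u : List ℕ} (hu : IsPermWord u) (v : List ℕ) (i : ℕ) :
    GlobalDescent (triangle v u) i ↔
      GlobalDescent v i ∨ (i = v.length ∧ v ≠ [] ∧ u ≠ []) ∨
        ∃ j, GlobalDescent u j ∧ i = v.length + j := by
  rcases lt_or_ge i v.length with hi | hi
  · rw [globalDescent_triangle_of_lt hu hi]
    refine ⟨Or.inl, ?_⟩
    rintro (h | ⟨rfl, -⟩ | ⟨j, ⟨hj, -⟩, rfl⟩)
    · exact h
    all_goals omega
  obtain ⟨j, rfl⟩ := Nat.exists_eq_add_of_le hi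
  have hv : ¬ GlobalDescent v (v.length + j) := fun h => by have := h.2.1; omega
  rw [globalDescent_triangle_length_add hu]
  rcases Nat.eq_zero_or_pos j with rfl | hj
  · simp [List.length_pos_iff, GlobalDescent]
  · have hne : v.length + j ≠ v.length := by omega
    have hpos : 0 < v.length + j := by omega
    simp only [hv, hne, hpos, hj, false_or, false_and, true_and, add_right_inj,
      exists_eq_right', globalDescent_iff_take_drop]

lemma exists_triangle_of_append {t d : List ℕ} (h : IsPermWord (t ++ d))
    (hlt : ∀ a ∈ t, ∀ b ∈ d, b < a) :
    IsPermWord d ∧ ∃ v, IsPermWord v ∧ v.length = t.length ∧ t ++ d = triangle v d := by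
  obtain ⟨hnd, hbound⟩ := isPermWord_iff.mp h
  rw [List.length_append] at hbound
  obtain ⟨htnd, hdnd, hdisj⟩ := List.nodup_append.mp hnd
  have hd : IsPermWord d := by
    refine isPermWord_iff.mpr ⟨hdnd, fun b hb => ?_⟩
    by_contra! hb'
    -- the `|t|` distinct letters of `t` would all lie in the interval `(b, |t| + |d|)`
    have hsub : t ⊆ List.range' (b + 1) (t.length + d.length - (b + 1)) := fun a ha => by
      have := hlt a ha b hb
      have := hbound a (List.mem_append_left d ha)
      rw [List.mem_range'_1]; omega
    have := (htnd.subperm hsub).length_le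
    rw [List.length_range'] at this
    have := hbound b (List.mem_append_right t hb)
    omega
  have ht : ∀ a ∈ t, d.length ≤ a := fun a ha => by
    by_contra! ha'
    exact hdisj a ha a (hd.mem_iff.mpr (List.mem_range.mpr ha')) rfl
  refine ⟨hd, t.map (· - d.length), isPermWord_iff.mpr ⟨?_, ?_⟩, List.length_map _, ?_⟩
  · exact htnd.map_on fun x hx y hy hxy => by have := ht x hx; have := ht y hy; omega
  · simp only [List.length_map, List.forall_mem_map]
    intro a ha
    have := ht a ha
    have := hbound a (List.mem_append_left d ha)
    omega
  · rw [triangle, List.map_map]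
    nth_rw 1 [← t.map_id]
    exact congrArg (· ++ d) (List.map_congr_left fun a ha => by simp [Nat.sub_add_cancel (ht a ha)])

lemma exists_triangle_of_globalDescent {σ : List ℕ} (hσ : IsPermWord σ) {i : ℕ}
    (hgd : GlobalDescent σ i) :
    ∃ u v, IsPermWord u ∧ IsPermWord v ∧ u ≠ [] ∧ v ≠ [] ∧ σ = triangle v u := by
  obtain ⟨hi, hin, hlt⟩ := globalDescent_iff_take_drop.mp hgd
  rw [← σ.take_append_drop i] at hσ ⊢
  obtain ⟨hd, v, hv, hvlen, hσv⟩ := exists_triangle_of_append hσ hlt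
  refine ⟨_, v, hd, hv, ?_, ?_, hσv⟩
  · simpa [← List.length_pos_iff] using hin
  · rw [← List.length_pos_iff, hvlen, List.length_take]; omega

lemma triIndec_iff_forall_not_globalDescent {σ : List ℕ} (hσ : IsPermWord σ) (hne : σ ≠ []) :
    TriIndec σ ↔ ∀ i, ¬ GlobalDescent σ i := by
  refine ⟨fun ⟨_, _, hindec⟩ i hgd => ?_, fun hno => ⟨hσ, hne, fun u v hu hv hσuv => ?_⟩⟩
  · obtain ⟨u, v, hu, hv, hu0, hv0, hσuv⟩ := exists_triangle_of_globalDescent hσ hgd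
    exact (hindec u v hu hv hσuv).elim hu0 hv0
  · by_contra! h
    refine hno v.length ?_
    rw [hσuv, globalDescent_triangle_iff hu]
    exact Or.inr (Or.inl ⟨rfl, h.2, h.1⟩)

lemma isPermWord_foldr_triangle {L : List (List ℕ)} (h : ∀ x ∈ L, IsPermWord x) :
    IsPermWord (L.foldr triangle []) := by
  induction L with
  | nil => simp [IsPermWord]
  | cons σ L ih =>
    rw [List.forall_mem_cons] at h
    exact isPermWord_triangle (ih h.2) h.1

lemma foldr_triangle_eq_nil_iff {L : List (List ℕ)} (h : ∀ x ∈ L, x ≠ []) :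
    L.foldr triangle [] = [] ↔ L = [] := by
  cases L with
  | nil => simp
  | cons σ L => simp [triangle, h σ List.mem_cons_self]

lemma exists_sum_take_cons_iff {α : Type*} (f : α → ℕ) (a : α) (l : List α) (i : ℕ) :
    (∃ m, 0 < m ∧ m < (a :: l).length ∧ i = (((a :: l).take m).map f).sum) ↔
      (i = f a ∧ l ≠ []) ∨
        ∃ j, (∃ m, 0 < m ∧ m < l.length ∧ j = ((l.take m).map f).sum) ∧ i = f a + j := by
  constructor
  · rintro ⟨_ | _ | m, hm0, hml, rfl⟩
    · omega
    · exact Or.inl ⟨by simp, by simpa [← List.length_pos_iff] using hml⟩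
    · exact Or.inr ⟨_, ⟨m + 1, by omega, by simpa using hml, rfl⟩, by simp⟩
  · rintro (⟨rfl, hl⟩ | ⟨_, ⟨m, hm0, hml, rfl⟩, rfl⟩)
    · exact ⟨1, one_pos, by simpa [List.length_pos_iff] using hl, by simp⟩
    · exact ⟨m + 1, by omega, by simpa using hml, by simp⟩

lemma globalDescent_foldr_triangle_iff {L : List (List ℕ)}
    (hL : ∀ x ∈ L, IsPermWord x ∧ x ≠ [] ∧ ∀ i, ¬ GlobalDescent x i) (i : ℕ) :
    GlobalDescent (L.foldr triangle []) i ↔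
      ∃ m, 0 < m ∧ m < L.length ∧ i = ((L.take m).map List.length).sum := by
  induction L generalizing i with
  | nil => simp [GlobalDescent]
  | cons σ L ih =>
    rw [List.forall_mem_cons] at hL
    obtain ⟨⟨hσ, hσne, hσgd⟩, hL⟩ := hL
    have hU := isPermWord_foldr_triangle fun x hx => (hL x hx).1
    have hUne : L.foldr triangle [] = [] ↔ L = [] :=
      foldr_triangle_eq_nil_iff fun x hx => (hL x hx).2.1
    rw [List.foldr_cons, globalDescent_triangle_iff hU, exists_sum_take_cons_iff]
    simp only [ne_eq, hσgd, hσne, hUne, ih hL, false_or, not_false_eq_true, true_and]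

/-- A permutation is `△`-indecomposable iff it has no global
descent; and if `σ = σ₁ △ ⋯ △ σ_k` with the `σᵢ` indecomposable, the global
descents of `σ` are exactly the proper nonempty partial sums `|σ₁| + ⋯ + |σ_m|`. -/
theorem triIndec_iff_no_globalDescent :
    (∀ σ : List ℕ, IsPermWord σ → σ ≠ [] →
      (TriIndec σ ↔ ∀ i, ¬ GlobalDescent σ i)) ∧
    (∀ L : List (List ℕ), (∀ x ∈ L, TriIndec x) →
      ∀ i, GlobalDescent (L.foldr triangle []) i ↔
        ∃ m, 0 < m ∧ m < L.length ∧ i = ((L.take m).map List.length).sum) := by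
  refine ⟨fun σ => triIndec_iff_forall_not_globalDescent, fun L hL => ?_⟩
  refine globalDescent_foldr_triangle_iff fun x hx => ?_
  have h := hL x hx
  exact ⟨h.1, h.2.1, (triIndec_iff_forall_not_globalDescent h.1 h.2.1).mp h⟩
end

section
/- The plactic (Knuth) equivalence on permutations is compatible with the left shifted concatenation: if u ∼_plax u' in S_p, then for any v ∈ S_q, v △ u ∼_plax v △ u' (and similarly if v ∼_plax v' then v △ u ∼_plax v' △ u). Consequently △ induces a well-defined associative product on plactic classes (standard Young tableaux). -/
/-- An elementary Knuth move: `x j i k y ↦ x j k i y` or `x i k j y ↦ x k i j y`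
for letters `i < j < k`. -/
inductive KnuthStep : List ℕ → List ℕ → Prop
  | k1 (x y : List ℕ) (i j k : ℕ) (h1 : i < j) (h2 : j < k) :
      KnuthStep (x ++ [j, i, k] ++ y) (x ++ [j, k, i] ++ y)
  | k2 (x y : List ℕ) (i j k : ℕ) (h1 : i < j) (h2 : j < k) :
      KnuthStep (x ++ [i, k, j] ++ y) (x ++ [k, i, j] ++ y)

/-- Plactic (Knuth) equivalence: the equivalence relation generated by Knuth moves. -/
def Plax : List ℕ → List ℕ → Prop := Relation.EqvGen KnuthStep

lemma KnuthStep.append_left (z : List ℕ) {a b : List ℕ} (h : KnuthStep a b) :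
    KnuthStep (z ++ a) (z ++ b) := by
  cases h with
  | k1 x y i j k h1 h2 =>
      simpa [List.append_assoc] using KnuthStep.k1 (z ++ x) y i j k h1 h2
  | k2 x y i j k h1 h2 =>
      simpa [List.append_assoc] using KnuthStep.k2 (z ++ x) y i j k h1 h2

lemma KnuthStep.append_right (z : List ℕ) {a b : List ℕ} (h : KnuthStep a b) :
    KnuthStep (a ++ z) (b ++ z) := by
  cases h with
  | k1 x y i j k h1 h2 =>
      simpa [List.append_assoc] using KnuthStep.k1 x (y ++ z) i j k h1 h2
  | k2 x y i j k h1 h2 =>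
      simpa [List.append_assoc] using KnuthStep.k2 x (y ++ z) i j k h1 h2

lemma KnuthStep.map_add (n : ℕ) {a b : List ℕ} (h : KnuthStep a b) :
    KnuthStep (a.map (· + n)) (b.map (· + n)) := by
  cases h with
  | k1 x y i j k h1 h2 =>
      simpa [List.map_append] using
        KnuthStep.k1 (x.map (· + n)) (y.map (· + n)) (i + n) (j + n) (k + n)
          (by omega) (by omega)
  | k2 x y i j k h1 h2 =>
      simpa [List.map_append] using
        KnuthStep.k2 (x.map (· + n)) (y.map (· + n)) (i + n) (j + n) (k + n)
          (by omega) (by omega)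

lemma Plax.lift {f : List ℕ → List ℕ}
    (hf : ∀ a b, KnuthStep a b → KnuthStep (f a) (f b)) {a b : List ℕ}
    (h : Plax a b) : Plax (f a) (f b) := by
  induction h with
  | rel a b h => exact Relation.EqvGen.rel _ _ (hf _ _ h)
  | refl a => exact Relation.EqvGen.refl _
  | symm a b _ ih => exact Relation.EqvGen.symm _ _ ih
  | trans a b c _ _ ih1 ih2 => exact Relation.EqvGen.trans _ _ _ ih1 ih2

/-- Plactic equivalence is compatible with left shifted
concatenation (in both arguments); since `△` is moreover associative, it induces a
well-defined associative product on plactic classes (standard Young tableaux). -/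
theorem plax_compatible_triangle :
    (∀ u u' v : List ℕ, u.length = u'.length → Plax u u' →
      Plax (triangle v u) (triangle v u')) ∧
    (∀ u v v' : List ℕ, Plax v v' → Plax (triangle v u) (triangle v' u)) ∧
    (∀ u v w : List ℕ, triangle (triangle w v) u = triangle w (triangle v u)) := by
  refine ⟨?_, ?_, ?_⟩
  · intro u u' v hlen h
    unfold triangle
    rw [hlen]
    exact Plax.lift (fun a b hab => hab.append_left _) h
  · intro u v v' h
    unfold triangle
    exact Plax.lift (fun a b hab => (hab.map_add _).append_right _) h
  · intro u v w
    simp [triangle, Function.comp, add_assoc]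
end

section
/- The Taskin weak order on tableaux is compatible with the product △: if U ≤ U' and V ≤ V' then V △ U ≤ V' △ U'. -/
/-- Schensted row insertion: insert `x` into a row, returning the new row and the
bumped entry (if any). -/
def insertRow (x : ℕ) : List ℕ → List ℕ × Option ℕ
  | [] => ([x], none)
  | y :: ys =>
    if x < y then (x :: ys, some y)
    else
      let r := insertRow x ys
      (y :: r.1, r.2)

/-- Schensted insertion of a letter into a tableau (list of rows, bottom row first). -/
def insertTab : List (List ℕ) → ℕ → List (List ℕ)
  | [], x => [[x]]
  | r :: rs, x =>
    match insertRow x r with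
    | (r', none) => r' :: rs
    | (r', some y) => r' :: insertTab rs y

/-- The Robinson–Schensted insertion tableau `P(w)` of a word `w`. -/
def rsP (w : List ℕ) : List (List ℕ) := w.foldl insertTab []

/-- The (row) reading word of a tableau: rows read from the top row down. -/
def rword (t : List (List ℕ)) : List ℕ := t.reverse.flatten

/-- The Taskin weak order on tableaux: the transitive (and reflexive) closure of
the image of the right weak order under Robinson–Schensted insertion. -/
def taskinLe : List (List ℕ) → List (List ℕ) → Prop :=
  Relation.ReflTransGen (fun T T' => ∃ u v : List ℕ,
    IsPermWord u ∧ IsPermWord v ∧ rsP u = T ∧ rsP v = T' ∧ weakLe u v)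

/-!
Robinson–Schensted insertion is invariant under the Knuth moves `xzy ↔ zxy` and `yxz ↔ yzx`
(`x < y < z`), and every word is Knuth equivalent to the reading word of its tableau; so for
words with distinct letters `P(w) = P(w')` exactly when `w` and `w'` are Knuth equivalent.
Knuth equivalence is a congruence and survives deleting all letters `≥ n`.

Hence `P(v △ u) = P(v̄ u)` depends only on `P(u)`, and also only on `P(v)`, because insertion
commutes with shifting the letters. Moreover `△` is monotone for the weak order on words.
A Taskin chain from `P(u)` to `P(u')` may run through permutations of other sizes; restricting
each of them to its letters below `|u|`, padded by the missing ones, preserves the weak-order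
steps and the coincidences of tableaux, so the chain lifts to one from `P(v △ u)` to
`P(v △ u')`. The same argument applies to `v`.
-/

/-! ### Row insertion -/

theorem insertRow_nil (a : ℕ) : insertRow a [] = ([a], none) := rfl

theorem insertRow_cons_of_lt {a b : ℕ} (B : List ℕ) (h : a < b) :
    insertRow a (b :: B) = (a :: B, some b) := by
  simp [insertRow, h]

theorem insertRow_cons_of_gt {a b : ℕ} (B : List ℕ) (h : b < a) :
    insertRow a (b :: B) = (b :: (insertRow a B).1, (insertRow a B).2) := by
  simp [insertRow, Nat.not_lt.2 h.le]

theorem insertRow_append_of_forall_lt {a : ℕ} {A : List ℕ} (B : List ℕ)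
    (hA : ∀ t ∈ A, t < a) : insertRow a (A ++ B) = (A ++ (insertRow a B).1, (insertRow a B).2) := by
  induction A with
  | nil => rfl
  | cons c A ih =>
    rw [List.forall_mem_cons] at hA
    simp [List.cons_append, insertRow_cons_of_gt _ hA.1, ih hA.2]

theorem insertRow_of_forall_lt {a : ℕ} {A : List ℕ} (hA : ∀ t ∈ A, t < a) :
    insertRow a A = (A ++ [a], none) := by
  simpa [insertRow_nil] using insertRow_append_of_forall_lt [] hA

theorem insertRow_of_forall_gt {a : ℕ} {B : List ℕ} (hB : ∀ t ∈ B, a < t) :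
    insertRow a B = (a :: B.tail, B.head?) := by
  cases B with
  | nil => rfl
  | cons b B => exact insertRow_cons_of_lt B (hB b List.mem_cons_self)

theorem insertRow_append_of_lt {a : ℕ} {A B : List ℕ} (hA : ∀ t ∈ A, t < a)
    (hB : ∀ t ∈ B, a < t) : insertRow a (A ++ B) = (A ++ a :: B.tail, B.head?) := by
  rw [insertRow_append_of_forall_lt B hA, insertRow_of_forall_gt hB]

theorem exists_eq_append_of_pairwise_lt {R : List ℕ} (hR : R.Pairwise (· < ·)) {a : ℕ}
    (ha : a ∉ R) : ∃ A B, R = A ++ B ∧ (A ++ a :: B).Pairwise (· < ·) := by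
  induction R with
  | nil => exact ⟨[], [], rfl, by simp⟩
  | cons r R ih =>
    rw [List.pairwise_cons] at hR
    rw [List.mem_cons, not_or] at ha
    rcases Nat.lt_or_gt_of_ne ha.1 with har | hra
    · refine ⟨[], r :: R, rfl, ?_⟩
      simp only [List.nil_append, List.pairwise_cons, List.mem_cons, forall_eq_or_imp]
      exact ⟨⟨har, fun t ht => har.trans (hR.1 t ht)⟩, hR.1, hR.2⟩
    · obtain ⟨A, B, rfl, hAB⟩ := ih hR.2 ha.2
      refine ⟨r :: A, B, rfl, List.pairwise_cons.2 ⟨fun t (ht : t ∈ A ++ a :: B) => ?_, hAB⟩⟩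
      simp only [List.mem_append, List.mem_cons] at ht
      rcases ht with ht | rfl | ht
      · exact hR.1 t (List.mem_append_left _ ht)
      · exact hra
      · exact hR.1 t (List.mem_append_right _ ht)

theorem forall_lt_and_forall_gt_of_pairwise {A B : List ℕ} {a : ℕ}
    (h : (A ++ a :: B).Pairwise (· < ·)) : (∀ t ∈ A, t < a) ∧ ∀ t ∈ B, a < t := by
  rw [List.pairwise_append, List.pairwise_cons] at h
  exact ⟨fun t ht => h.2.2 t ht a List.mem_cons_self, h.2.1.1⟩

def insertRowList (R : List ℕ) : List ℕ → List ℕ × List ℕ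
  | [] => (R, [])
  | a :: w => ((insertRowList (insertRow a R).1 w).1,
      (insertRow a R).2.toList ++ (insertRowList (insertRow a R).1 w).2)

theorem foldl_insertTab_cons (R : List ℕ) (rs : List (List ℕ)) (w : List ℕ) :
    w.foldl insertTab (R :: rs) =
      (insertRowList R w).1 :: (insertRowList R w).2.foldl insertTab rs := by
  induction w generalizing R rs with
  | nil => rfl
  | cons a w ih =>
    rcases h : insertRow a R with ⟨R', _ | b⟩ <;> simp [insertTab, insertRowList, h, ih]

theorem mem_of_insertRow_snd_eq_some {a b : ℕ} {R : List ℕ} (h : (insertRow a R).2 = some b) :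
    b ∈ R := by
  induction R with
  | nil => simp [insertRow] at h
  | cons r R ih =>
    by_cases har : a < r
    · simp_all [insertRow_cons_of_lt]
    · simp only [insertRow, har, if_false] at h
      exact List.mem_cons_of_mem r (ih h)

theorem eq_or_mem_of_mem_insertRow_fst (a : ℕ) (R : List ℕ) :
    ∀ t ∈ (insertRow a R).1, t = a ∨ t ∈ R := by
  induction R with
  | nil => simp [insertRow]
  | cons r R ih =>
    by_cases har : a < r
    · simp_all [insertRow_cons_of_lt]
    · simp only [insertRow, har, if_false, List.mem_cons]
      grind

theorem mem_or_mem_of_mem_insertRowList_snd {R w : List ℕ} {b : ℕ}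
    (hb : b ∈ (insertRowList R w).2) : b ∈ R ∨ b ∈ w := by
  induction w generalizing R with
  | nil => simp [insertRowList] at hb
  | cons a w ih =>
    simp only [insertRowList, List.mem_append, Option.mem_toList] at hb
    rcases hb with hb | hb
    · exact Or.inl (mem_of_insertRow_snd_eq_some hb)
    · rcases ih hb with h | h
      · rcases eq_or_mem_of_mem_insertRow_fst a R b h with rfl | h <;> simp_all
      · simp [h]

theorem exists_eq_append_of_pairwise_lt₃ {R : List ℕ} (hR : R.Pairwise (· < ·)) {x y z : ℕ}
    (hxy : x < y) (hyz : y < z) (hx : x ∉ R) (hy : y ∉ R) (hz : z ∉ R) :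
    ∃ P A B C, R = P ++ A ++ B ++ C ∧ (P ++ x :: A ++ y :: B ++ z :: C).Pairwise (· < ·) := by
  obtain ⟨P, Q, rfl, hPQ⟩ := exists_eq_append_of_pairwise_lt hR hx
  have hQ : Q.Pairwise (· < ·) := hR.sublist (List.sublist_append_right P Q)
  obtain ⟨A, Q, rfl, hAQ⟩ :=
    exists_eq_append_of_pairwise_lt hQ (a := y) fun h => hy (by simp [h])
  have hQ : Q.Pairwise (· < ·) := hQ.sublist (List.sublist_append_right A Q)
  obtain ⟨B, C, rfl, hBC⟩ :=
    exists_eq_append_of_pairwise_lt hQ (a := z) fun h => hz (by simp [h])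
  refine ⟨P, A, B, C, by simp, ?_⟩
  simp only [List.pairwise_append, List.pairwise_cons, List.mem_append, List.mem_cons] at *
  grind

def RowsSorted (T : List (List ℕ)) : Prop := ∀ r ∈ T, r.Pairwise (· < ·)

theorem insertTab_rowsSorted_and_perm (T : List (List ℕ)) (x : ℕ) (hT : RowsSorted T)
    (hx : (x :: T.flatten).Nodup) :
    RowsSorted (insertTab T x) ∧ (insertTab T x).flatten.Perm (x :: T.flatten) := by
  induction T generalizing x with
  | nil => simp [insertTab, RowsSorted]
  | cons R rs ih =>
    have hrs : RowsSorted rs := fun r hr => hT r (List.mem_cons_of_mem R hr)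
    simp only [List.flatten_cons, List.nodup_cons, List.mem_append, not_or,
      List.nodup_append] at hx
    obtain ⟨A, B, rfl, hAB⟩ := exists_eq_append_of_pairwise_lt (hT _ List.mem_cons_self) hx.1.1
    obtain ⟨hA, hB⟩ := forall_lt_and_forall_gt_of_pairwise hAB
    rcases B with _ | ⟨b, B⟩
    · simp only [insertTab, List.append_nil, insertRow_of_forall_lt hA]
      exact ⟨List.forall_mem_cons.2 ⟨hAB, hrs⟩, by simp [List.perm_middle]⟩
    · simp only [insertTab, insertRow_append_of_lt hA hB, List.tail_cons, List.head?_cons]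
      have hb : (b :: rs.flatten).Nodup :=
        List.nodup_cons.2 ⟨fun h => hx.2.2.2 b (by simp) b h rfl, hx.2.2.1⟩
      obtain ⟨hs, hp⟩ := ih b hrs hb
      refine ⟨List.forall_mem_cons.2 ⟨hAB.sublist (by simp), hs⟩, ?_⟩
      refine (hp.append_left _).trans ?_
      simp [List.perm_iff_count, List.count_cons]
      omega

theorem rsP_append (w t : List ℕ) : rsP (w ++ t) = t.foldl insertTab (rsP w) :=
  List.foldl_append

theorem rsP_rowsSorted_and_perm {w : List ℕ} (hw : w.Nodup) :
    RowsSorted (rsP w) ∧ (rsP w).flatten.Perm w := by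
  induction w using List.reverseRecOn with
  | nil => simp [rsP, RowsSorted]
  | append_singleton w x ih =>
    rw [List.nodup_append] at hw
    obtain ⟨hs, hp⟩ := ih hw.1
    have hx : (x :: (rsP w).flatten).Nodup :=
      List.nodup_cons.2 ⟨fun h => by simpa using hw.2.2 x (hp.subset h) x, hp.nodup_iff.2 hw.1⟩
    rw [rsP_append, List.foldl_cons, List.foldl_nil]
    obtain ⟨hs', hp'⟩ := insertTab_rowsSorted_and_perm _ x hs hx
    exact ⟨hs', hp'.trans ((hp.cons x).trans (List.perm_append_singleton x w).symm)⟩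

theorem perm_of_rsP_eq {w w' : List ℕ} (hw : w.Nodup) (hw' : w'.Nodup) (h : rsP w = rsP w') :
    w.Perm w' :=
  (rsP_rowsSorted_and_perm hw).2.symm.trans (h ▸ (rsP_rowsSorted_and_perm hw').2)

/-! ### Knuth equivalence -/

inductive KnuthTriple : List ℕ → List ℕ → Prop
  | xzy {x y z : ℕ} : x < y → y < z → KnuthTriple [x, z, y] [z, x, y]
  | yxz {x y z : ℕ} : x < y → y < z → KnuthTriple [y, x, z] [y, z, x]

theorem KnuthTriple.perm {t t' : List ℕ} (h : KnuthTriple t t') : t.Perm t' := by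
  cases h
  · exact List.Perm.swap _ _ _
  · exact (List.Perm.swap _ _ _).cons _

theorem insertRowList_knuthTriple {R t t' : List ℕ} (hR : R.Pairwise (· < ·))
    (h : KnuthTriple t t') (ht : ∀ a ∈ t, a ∉ R) :
    (insertRowList R t).1 = (insertRowList R t').1 ∧
      ((insertRowList R t).2 = (insertRowList R t').2 ∨
        KnuthTriple (insertRowList R t).2 (insertRowList R t').2 ∨
        KnuthTriple (insertRowList R t').2 (insertRowList R t).2) := by
  cases h with
  | xzy hxy hyz | yxz hxy hyz =>
    simp only [List.mem_cons, List.not_mem_nil, or_false, forall_eq_or_imp, forall_eq] at ht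
    -- `R = P ++ A ++ B ++ C` with `P < x < A < y < B < z < C`; only the first two letters of
    -- each gap can be bumped, and in each shape both insertions are computed symbolically.
    obtain ⟨P, A, B, C, rfl, hL⟩ :=
      exists_eq_append_of_pairwise_lt₃ hR hxy hyz (by tauto) (by tauto) (by tauto)
    clear hR ht
    rcases A with _ | ⟨a, A⟩ <;> rcases B with _ | ⟨b, _ | ⟨b₂, B⟩⟩ <;>
      rcases C with _ | ⟨c, _ | ⟨c₂, C⟩⟩ <;>
      simp only [List.pairwise_append, List.pairwise_cons, List.mem_append,
        List.mem_cons, List.append_assoc, List.cons_append, List.nil_append, or_imp, forall_and,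
        List.not_mem_nil, IsEmpty.forall_iff, implies_true, and_true, true_and, forall_eq,
        ← List.forall_iff_forall_mem] at hL <;>
      casesm* _ ∧ _ <;>
      -- side conditions `∀ t ∈ L, _` become `List.Forall` facts, which are hypotheses
      simp only [insertRowList, insertRow_cons_of_gt,
        insertRow_append_of_forall_lt, insertRow_of_forall_lt, insertRow_of_forall_gt,
        List.append_assoc, List.cons_append, List.nil_append, List.append_nil, List.tail_cons,
        List.head?_cons, Option.toList_some, Option.toList_none,
        ← List.forall_iff_forall_mem, List.forall_append, List.forall_cons,
        List.Forall, and_true, true_and, true_or, *] <;>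
      first
      | exact .inr (.inl (.xzy (by omega) (by omega)))
      | exact .inr (.inr (.xzy (by omega) (by omega)))
      | exact .inr (.inl (.yxz (by omega) (by omega)))
      | exact .inr (.inr (.yxz (by omega) (by omega)))

theorem foldl_insertTab_knuthTriple (T : List (List ℕ)) (hT : RowsSorted T)
    (hnd : T.flatten.Nodup) {t t' : List ℕ} (h : KnuthTriple t t')
    (ht : ∀ a ∈ t, a ∉ T.flatten) :
    t.foldl insertTab T = t'.foldl insertTab T := by
  induction T generalizing t t' with
  | nil =>
    cases h with
    | xzy hxy hyz | yxz hxy hyz =>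
      simp [insertTab, insertRow, hxy, hyz, hxy.trans hyz, Nat.not_lt.2, le_of_lt]
  | cons R rs ih =>
    have hrs : RowsSorted rs := fun r hr => hT r (List.mem_cons_of_mem R hr)
    simp only [List.flatten_cons, List.nodup_append, List.mem_append, not_or] at hnd ht
    obtain ⟨hrow, hbump⟩ := insertRowList_knuthTriple (hT R List.mem_cons_self) h
      (fun a ha => (ht a ha).1)
    rw [foldl_insertTab_cons, foldl_insertTab_cons, hrow]
    have hfresh : ∀ {s : List ℕ}, s.Perm t → ∀ a ∈ (insertRowList R s).2, a ∉ rs.flatten :=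
      fun hs a ha har => (mem_or_mem_of_mem_insertRowList_snd ha).elim
        (fun haR => hnd.2.2 a haR a har rfl) (fun has => (ht a (hs.subset has)).2 har)
    rcases hbump with hb | hb | hb
    · rw [hb]
    · rw [ih hrs hnd.2.1 hb (hfresh (List.Perm.refl t))]
    · rw [ih hrs hnd.2.1 hb (hfresh h.perm.symm)]

inductive KnuthStep_s11 : List ℕ → List ℕ → Prop
  | mk (l r : List ℕ) {t t' : List ℕ} :
      KnuthTriple t t' → KnuthStep_s11 (l ++ t ++ r) (l ++ t' ++ r)

def KnuthEquiv : List ℕ → List ℕ → Prop := Relation.EqvGen KnuthStep_s11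

namespace KnuthEquiv

theorem refl (w : List ℕ) : KnuthEquiv w w := Relation.EqvGen.refl w

theorem symm {w w' : List ℕ} (h : KnuthEquiv w w') : KnuthEquiv w' w :=
  Relation.EqvGen.symm _ _ h

theorem trans {w₁ w₂ w₃ : List ℕ} (h₁ : KnuthEquiv w₁ w₂) (h₂ : KnuthEquiv w₂ w₃) :
    KnuthEquiv w₁ w₃ :=
  Relation.EqvGen.trans _ _ _ h₁ h₂

theorem of_triple {t t' : List ℕ} (h : KnuthTriple t t') (l r : List ℕ) :
    KnuthEquiv (l ++ t ++ r) (l ++ t' ++ r) :=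
  Relation.EqvGen.rel _ _ (KnuthStep_s11.mk l r h)

theorem map {f : List ℕ → List ℕ} (hf : ∀ w w', KnuthStep_s11 w w' → KnuthEquiv (f w) (f w'))
    {w w' : List ℕ} (h : KnuthEquiv w w') : KnuthEquiv (f w) (f w') := by
  induction h with
  | rel _ _ h => exact hf _ _ h
  | refl => exact refl _
  | symm _ _ _ ih => exact ih.symm
  | trans _ _ _ _ _ ih₁ ih₂ => exact ih₁.trans ih₂

theorem append_left (c : List ℕ) {w w' : List ℕ} (h : KnuthEquiv w w') :
    KnuthEquiv (c ++ w) (c ++ w') :=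
  h.map (f := (c ++ ·)) fun _ _ ⟨l, r, ht⟩ => by simpa using of_triple ht (c ++ l) r

theorem append_right (c : List ℕ) {w w' : List ℕ} (h : KnuthEquiv w w') :
    KnuthEquiv (w ++ c) (w' ++ c) :=
  h.map (f := (· ++ c)) fun _ _ ⟨l, r, ht⟩ => by simpa using of_triple ht l (r ++ c)

theorem perm {w w' : List ℕ} (h : KnuthEquiv w w') : w.Perm w' := by
  induction h with
  | rel _ _ h => obtain ⟨l, r, ht⟩ := h; exact (ht.perm.append_left l).append_right r
  | refl => exact List.Perm.refl _
  | symm _ _ _ ih => exact ih.symm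
  | trans _ _ _ _ _ ih₁ ih₂ => exact ih₁.trans ih₂

end KnuthEquiv

theorem KnuthStep_s11.rsP_eq {w w' : List ℕ} (h : KnuthStep_s11 w w') (hw : w.Nodup) :
    rsP w = rsP w' := by
  obtain ⟨l, r, ht⟩ := h
  rw [List.nodup_append, List.nodup_append] at hw
  obtain ⟨hs, hp⟩ := rsP_rowsSorted_and_perm hw.1.1
  have hfresh : ∀ a ∈ _, a ∉ (rsP l).flatten :=
    fun a ha hal => hw.1.2.2 a (hp.subset hal) a ha rfl
  simp only [rsP_append,
    foldl_insertTab_knuthTriple (rsP l) hs (hp.nodup_iff.2 hw.1.1) ht hfresh]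

theorem KnuthEquiv.rsP_eq {w w' : List ℕ} (h : KnuthEquiv w w') (hw : w.Nodup) :
    rsP w = rsP w' := by
  induction h with
  | rel _ _ h => exact h.rsP_eq hw
  | refl => rfl
  | symm _ _ h ih => exact (ih ((KnuthEquiv.perm h).nodup_iff.2 hw)).symm
  | trans _ _ _ h₁ _ ih₁ ih₂ =>
    exact (ih₁ hw).trans (ih₂ ((KnuthEquiv.perm h₁).nodup_iff.1 hw))

/- Row insertion of `s` into `A ++ b :: B` is a Knuth equivalence of reading words,
`A b B s ≡ b A s B`: `s` moves left past `B`, then `b` moves left past `A`. -/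
theorem KnuthEquiv.cons_append_singleton {p s : ℕ} {B : List ℕ} (hB : B.Pairwise (· < ·))
    (hsp : s < p) (hpB : ∀ b ∈ B, p < b) : KnuthEquiv (p :: B ++ [s]) (p :: s :: B) := by
  induction B generalizing p with
  | nil => exact refl _
  | cons g B ih =>
    rw [List.pairwise_cons] at hB
    have hpg : p < g := hpB g List.mem_cons_self
    have h₁ := (ih hB.2 (hsp.trans hpg) hB.1).append_left [p]
    have h₂ := (of_triple (.yxz hsp hpg) [] B).symm
    simpa using h₁.trans h₂

theorem KnuthEquiv.append_cons_cons {A : List ℕ} {b s : ℕ} (hA : A.Pairwise (· < ·))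
    (hAs : ∀ a ∈ A, a < s) (hsb : s < b) (B : List ℕ) :
    KnuthEquiv (A ++ b :: s :: B) (b :: A ++ s :: B) := by
  induction A with
  | nil => exact refl _
  | cons a A ih =>
    rw [List.pairwise_cons] at hA
    rw [List.forall_mem_cons] at hAs
    have h₁ := (ih hA.2 hAs.2).append_left [a]
    have h₂ : KnuthEquiv (a :: b :: (A ++ s :: B)) (b :: a :: (A ++ s :: B)) := by
      cases A with
      | nil => simpa using of_triple (.xzy hAs.1 hsb) [] B
      | cons a' A =>
        simpa using of_triple (.xzy (hA.1 a' List.mem_cons_self)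
          ((hAs.2 a' List.mem_cons_self).trans hsb)) [] (A ++ s :: B)
    simpa using h₁.trans h₂

theorem rword_cons (r : List ℕ) (rs : List (List ℕ)) : rword (r :: rs) = rword rs ++ r := by
  simp [rword]

theorem knuthEquiv_rword_insertTab (T : List (List ℕ)) (x : ℕ) (hT : RowsSorted T)
    (hx : (x :: T.flatten).Nodup) : KnuthEquiv (rword T ++ [x]) (rword (insertTab T x)) := by
  induction T generalizing x with
  | nil => exact KnuthEquiv.refl _
  | cons R rs ih =>
    have hrs : RowsSorted rs := fun r hr => hT r (List.mem_cons_of_mem R hr)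
    simp only [List.flatten_cons, List.nodup_cons, List.mem_append, not_or,
      List.nodup_append] at hx
    obtain ⟨A, B, rfl, hAB⟩ := exists_eq_append_of_pairwise_lt (hT _ List.mem_cons_self) hx.1.1
    obtain ⟨hA, hB⟩ := forall_lt_and_forall_gt_of_pairwise hAB
    rcases B with _ | ⟨b, B⟩
    · simp only [insertTab, List.append_nil, insertRow_of_forall_lt hA, rword_cons]
      simpa using KnuthEquiv.refl _
    · simp only [insertTab, insertRow_append_of_lt hA hB, List.tail_cons, List.head?_cons,
        rword_cons]
      have hb : (b :: rs.flatten).Nodup :=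
        List.nodup_cons.2 ⟨fun h => hx.2.2.2 b (by simp) b h rfl, hx.2.2.1⟩
      have hbB : (b :: B).Pairwise (· < ·) := hAB.sublist (by simp)
      have hrow : KnuthEquiv (A ++ b :: B ++ [x]) (b :: A ++ x :: B) := by
        have h₁ := (KnuthEquiv.cons_append_singleton (List.pairwise_cons.1 hbB).2
          (hB b List.mem_cons_self) (List.pairwise_cons.1 hbB).1).append_left A
        have h₂ := KnuthEquiv.append_cons_cons (hAB.sublist (List.sublist_append_left _ _)) hA
          (hB b List.mem_cons_self) B
        simpa using h₁.trans h₂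
      have hrest : KnuthEquiv (rword rs ++ (b :: A ++ x :: B))
          (rword (insertTab rs b) ++ (A ++ x :: B)) := by
        simpa using (ih b hrs hb).append_right (A ++ x :: B)
      simpa using (hrow.append_left (rword rs)).trans hrest

theorem knuthEquiv_rword_rsP {w : List ℕ} (hw : w.Nodup) : KnuthEquiv w (rword (rsP w)) := by
  induction w using List.reverseRecOn with
  | nil => exact KnuthEquiv.refl _
  | append_singleton w x ih =>
    rw [List.nodup_append] at hw
    obtain ⟨hs, hp⟩ := rsP_rowsSorted_and_perm hw.1
    have hx : (x :: (rsP w).flatten).Nodup :=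
      List.nodup_cons.2 ⟨fun h => by simpa using hw.2.2 x (hp.subset h) x, hp.nodup_iff.2 hw.1⟩
    rw [rsP_append, List.foldl_cons, List.foldl_nil]
    exact ((ih hw.1).append_right [x]).trans (knuthEquiv_rword_insertTab _ x hs hx)

theorem knuthEquiv_of_rsP_eq {w w' : List ℕ} (hw : w.Nodup) (hw' : w'.Nodup)
    (h : rsP w = rsP w') : KnuthEquiv w w' :=
  (knuthEquiv_rword_rsP hw).trans (h ▸ (knuthEquiv_rword_rsP hw').symm)

theorem rsP_append_left_congr (c : List ℕ) {w w' : List ℕ} (hw : (c ++ w).Nodup)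
    (hw' : w'.Nodup) (h : rsP w = rsP w') : rsP (c ++ w) = rsP (c ++ w') :=
  ((knuthEquiv_of_rsP_eq hw.of_append_right hw' h).append_left c).rsP_eq hw

theorem KnuthTriple.filter_lt {t t' : List ℕ} (h : KnuthTriple t t') (n : ℕ) :
    KnuthTriple (t.filter (· < n)) (t'.filter (· < n)) ∨
      t.filter (· < n) = t'.filter (· < n) := by
  cases h with
  | @xzy x y z hxy hyz | @yxz x y z hxy hyz =>
    by_cases hz : z < n
    · left
      simp only [List.filter_cons, hz, hyz.trans hz, (hxy.trans hyz).trans hz, decide_true,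
        if_true, List.filter_nil]
      constructor <;> assumption
    · right
      simp [List.filter_cons, hz]

theorem KnuthEquiv.filter_lt (n : ℕ) {w w' : List ℕ} (h : KnuthEquiv w w') :
    KnuthEquiv (w.filter (· < n)) (w'.filter (· < n)) :=
  h.map (f := (·.filter (· < n))) fun _ _ ⟨l, r, ht⟩ => by
    simp only [List.filter_append]
    rcases ht.filter_lt n with h' | h'
    · exact of_triple h' _ _
    · rw [h']
      exact refl _

theorem rsP_filter_lt_congr (n : ℕ) {w w' : List ℕ} (hw : w.Nodup) (hw' : w'.Nodup)
    (h : rsP w = rsP w') : rsP (w.filter (· < n)) = rsP (w'.filter (· < n)) :=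
  ((knuthEquiv_of_rsP_eq hw hw' h).filter_lt n).rsP_eq (hw.filter _)

/-! ### Inversion sets -/

theorem mem_invSet_iff_s11 {w : List ℕ} {p : ℕ × ℕ} :
    p ∈ invSet w ↔ p.2 < p.1 ∧ [p.1, p.2].Sublist w := by
  refine and_congr_right fun _ => ⟨?_, ?_⟩
  · rintro ⟨k, l, hkl, hk, hl⟩
    obtain ⟨hkw, hkv⟩ := List.getElem?_eq_some_iff.1 hk
    rw [← hkv]
    have hl' : p.2 ∈ w.drop (k + 1) := by
      refine List.mem_iff_getElem?.2 ⟨l - (k + 1), ?_⟩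
      rwa [List.getElem?_drop, Nat.add_sub_cancel' (by omega)]
    have hdrop := List.drop_sublist k w
    rw [← List.getElem_cons_drop hkw] at hdrop
    exact ((List.singleton_sublist.2 hl').cons_cons _).trans hdrop
  · intro h
    obtain ⟨r₁, r₂, rfl, h₁, h₂⟩ := List.cons_sublist_iff.1 h
    obtain ⟨k, hk⟩ := List.mem_iff_getElem?.1 h₁
    obtain ⟨m, hm⟩ := List.mem_iff_getElem?.1 (List.singleton_sublist.1 h₂)
    have hkr : k < r₁.length := (List.getElem?_eq_some_iff.1 hk).1
    refine ⟨k, r₁.length + m, by omega, ?_, ?_⟩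
    · rwa [List.getElem?_append_left hkr]
    · rwa [List.getElem?_append_right (by omega), Nat.add_sub_cancel_left]

theorem mem_invSet_append_s11 {s t : List ℕ} {p : ℕ × ℕ} :
    p ∈ invSet (s ++ t) ↔
      p ∈ invSet s ∨ p ∈ invSet t ∨ (p.2 < p.1 ∧ p.1 ∈ s ∧ p.2 ∈ t) := by
  simp only [mem_invSet_iff_s11, List.sublist_append_iff]
  constructor
  · rintro ⟨hlt, l₁, l₂, heq, h₁, h₂⟩
    rcases l₁ with _ | ⟨a, _ | ⟨b, _ | ⟨c, l₁⟩⟩⟩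
    · rw [List.nil_append] at heq
      exact .inr (.inl ⟨hlt, heq ▸ h₂⟩)
    · simp only [List.cons_append, List.nil_append, List.cons.injEq] at heq
      obtain ⟨rfl, rfl⟩ := heq
      exact .inr (.inr ⟨hlt, List.singleton_sublist.1 h₁, List.singleton_sublist.1 h₂⟩)
    · simp only [List.cons_append, List.cons.injEq, List.nil_append] at heq
      obtain ⟨rfl, rfl, rfl⟩ := heq
      exact .inl ⟨hlt, h₁⟩
    · simp at heq
  · rintro (⟨hlt, h⟩ | ⟨hlt, h⟩ | ⟨hlt, h₁, h₂⟩)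
    · exact ⟨hlt, [p.1, p.2], [], by simp, h, List.nil_sublist _⟩
    · exact ⟨hlt, [], [p.1, p.2], by simp, List.nil_sublist _, h⟩
    · exact ⟨hlt, [p.1], [p.2], rfl, List.singleton_sublist.2 h₁, List.singleton_sublist.2 h₂⟩

theorem mem_invSet_filter_lt {w : List ℕ} {n : ℕ} {p : ℕ × ℕ} :
    p ∈ invSet (w.filter (· < n)) ↔ p ∈ invSet w ∧ p.1 < n := by
  simp only [mem_invSet_iff_s11]
  constructor
  · rintro ⟨hlt, h⟩
    have hn : p.1 ∈ w.filter (· < n) := h.subset List.mem_cons_self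
    exact ⟨⟨hlt, h.trans List.filter_sublist⟩, by simpa using (List.mem_filter.1 hn).2⟩
  · rintro ⟨⟨hlt, h⟩, hn⟩
    exact ⟨hlt, by simpa [hn, hlt.trans hn] using h.filter (· < n)⟩

theorem not_mem_invSet_of_pairwise {w : List ℕ} (hw : w.Pairwise (· < ·)) (p : ℕ × ℕ) :
    p ∉ invSet w := fun hp => by
  obtain ⟨hlt, h⟩ := mem_invSet_iff_s11.1 hp
  have := List.rel_of_pairwise_cons (hw.sublist h) List.mem_cons_self
  omega

theorem weakLe.map_add {c d : List ℕ} (h : weakLe c d) (k : ℕ) :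
    weakLe (c.map (· + k)) (d.map (· + k)) := by
  intro p hp
  obtain ⟨hlt, hsub⟩ := mem_invSet_iff_s11.1 hp
  obtain ⟨l, hl, heq⟩ := List.sublist_map_iff.1 hsub
  rcases l with _ | ⟨a, _ | ⟨b, _ | ⟨c, l⟩⟩⟩ <;> simp at heq
  obtain ⟨h₁, h₂⟩ := heq
  have hab : (a, b) ∈ invSet c := mem_invSet_iff_s11.2 ⟨show b < a by omega, hl⟩
  obtain ⟨-, hd⟩ := mem_invSet_iff_s11.1 (h hab)
  exact mem_invSet_iff_s11.2 ⟨hlt, by simpa [← h₁, ← h₂] using hd.map (· + k)⟩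

/-! ### Permutation words -/

theorem IsPermWord.nodup {w : List ℕ} (h : IsPermWord w) : w.Nodup :=
  h.nodup_iff.2 List.nodup_range

theorem IsPermWord.mem_iff {w : List ℕ} (h : IsPermWord w) {a : ℕ} : a ∈ w ↔ a < w.length := by
  rw [List.Perm.mem_iff h, List.mem_range]

/-- Taskin chains may pass through permutations of other sizes; this brings them all to
size `n`. -/
def restrictPad (n : ℕ) (w : List ℕ) : List ℕ :=
  w.filter (· < n) ++ (List.range n).filter (· ∉ w)

theorem restrictPad_isPermWord {w : List ℕ} (hw : w.Nodup) (n : ℕ) :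
    IsPermWord (restrictPad n w) ∧ (restrictPad n w).length = n := by
  have hperm : (restrictPad n w).Perm (List.range n) := by
    refine (List.Perm.append_right _ ((List.perm_ext_iff_of_nodup (hw.filter _)
      (List.nodup_range.filter _)).2 fun a => ?_)).trans
      (by simpa using List.filter_append_perm (· ∈ w) (List.range n))
    simp [and_comm]
  have hlen : (restrictPad n w).length = n := by simpa using hperm.length_eq
  exact ⟨by rw [IsPermWord, hlen]; exact hperm, hlen⟩

theorem restrictPad_length_self {w : List ℕ} (hw : IsPermWord w) : restrictPad w.length w = w := by
  have h₁ : w.filter (· < w.length) = w :=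
    List.filter_eq_self.2 fun a ha => by simpa using hw.mem_iff.1 ha
  have h₂ : (List.range w.length).filter (· ∉ w) = [] :=
    List.filter_eq_nil_iff.2 fun a ha => by simpa using hw.mem_iff.2 (List.mem_range.1 ha)
  rw [restrictPad, h₁, h₂, List.append_nil]

theorem rsP_restrictPad_congr (n : ℕ) {w w' : List ℕ} (hw : w.Nodup) (hw' : w'.Nodup)
    (h : rsP w = rsP w') : rsP (restrictPad n w) = rsP (restrictPad n w') := by
  have hmem : ∀ a, a ∈ w ↔ a ∈ w' := fun a => (perm_of_rsP_eq hw hw' h).mem_iff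
  simp only [restrictPad, rsP_append, rsP_filter_lt_congr n hw hw' h, hmem]

theorem weakLe_restrictPad {w w' : List ℕ} (hw : IsPermWord w) (h : weakLe w w') (n : ℕ) :
    weakLe (restrictPad n w) (restrictPad n w') := by
  intro p hp
  rcases mem_invSet_append_s11.1 hp with hp | hp | ⟨hlt, h₁, h₂⟩
  · rw [mem_invSet_filter_lt] at hp
    exact mem_invSet_append_s11.2 (.inl (mem_invSet_filter_lt.2 ⟨h hp.1, hp.2⟩))
  · exact absurd hp (not_mem_invSet_of_pairwise (List.pairwise_lt_range.filter _) p)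
  · simp only [List.mem_filter, List.mem_range, decide_eq_true_eq] at h₁ h₂
    have := hw.mem_iff.1 h₁.1
    have := mt hw.mem_iff.2 h₂.2
    omega

/-! ### The product `△` -/

theorem insertRow_map_add (k x : ℕ) (R : List ℕ) :
    insertRow (x + k) (R.map (· + k)) =
      ((insertRow x R).1.map (· + k), (insertRow x R).2.map (· + k)) := by
  induction R with
  | nil => rfl
  | cons r R ih =>
    by_cases h : x < r
    · simp [insertRow, h]
    · simp [insertRow, h, ih]

theorem insertTab_map_add (k : ℕ) (T : List (List ℕ)) (x : ℕ) :
    insertTab (T.map (List.map (· + k))) (x + k) = (insertTab T x).map (List.map (· + k)) := by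
  induction T generalizing x with
  | nil => rfl
  | cons R rs ih =>
    have hmap := insertRow_map_add k x R
    rcases hr : insertRow x R with ⟨R', _ | b⟩ <;> rw [hr] at hmap <;>
      simp [insertTab, hr, hmap, ih]

theorem rsP_map_add (k : ℕ) (w : List ℕ) :
    rsP (w.map (· + k)) = (rsP w).map (List.map (· + k)) := by
  induction w using List.reverseRecOn with
  | nil => rfl
  | append_singleton w x ih =>
    simp only [List.map_append, List.map_cons, List.map_nil, rsP_append, List.foldl_cons,
      List.foldl_nil, ih, insertTab_map_add]

theorem triangle_isPermWord {v u : List ℕ} (hv : IsPermWord v) (hu : IsPermWord u) :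
    IsPermWord (triangle v u) := by
  have h : (v.map (· + u.length)).Perm ((List.range v.length).map (u.length + ·)) := by
    simpa [Nat.add_comm] using hv.map (· + u.length)
  rw [IsPermWord, triangle, List.length_append, List.length_map, Nat.add_comm, List.range_add]
  exact (h.append hu).trans List.perm_append_comm

theorem weakLe_triangle {v v' u u' : List ℕ} (hv : IsPermWord v) (hv' : IsPermWord v')
    (hu : IsPermWord u) (hu' : IsPermWord u') (hlv : v.length = v'.length)
    (hlu : u.length = u'.length) (hV : weakLe v v') (hU : weakLe u u') :
    weakLe (triangle v u) (triangle v' u') := by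
  intro p hp
  rw [triangle, mem_invSet_append_s11] at hp
  rw [triangle, mem_invSet_append_s11, ← hlu]
  rcases hp with hp | hp | ⟨hlt, h₁, h₂⟩
  · exact .inl (hV.map_add u.length hp)
  · exact .inr (.inl (hU hp))
  · refine .inr (.inr ⟨hlt, ?_, ?_⟩)
    · simpa only [List.mem_map, hv.mem_iff, hv'.mem_iff, hlv] using h₁
    · rwa [hu'.mem_iff, ← hlu, ← hu.mem_iff]

theorem rsP_triangle_congr_left {v v' : List ℕ} (u : List ℕ) (h : rsP v = rsP v') :
    rsP (triangle v u) = rsP (triangle v' u) := by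
  simp only [triangle, rsP_append, rsP_map_add, h]

theorem rsP_triangle_congr_right (v : List ℕ) {u u' : List ℕ} (hu : (triangle v u).Nodup)
    (hu' : u'.Nodup) (h : rsP u = rsP u') : rsP (triangle v u) = rsP (triangle v u') := by
  have hlen : u.length = u'.length := (perm_of_rsP_eq hu.of_append_right hu' h).length_eq
  rw [triangle, triangle, ← hlen]
  exact rsP_append_left_congr _ hu hu' h

/-! ### Lifting Taskin chains -/

theorem taskinLe_lift {φ : List ℕ → List ℕ} (hperm : ∀ p, IsPermWord p → IsPermWord (φ p))
    (hrsP : ∀ p q, IsPermWord p → IsPermWord q → rsP p = rsP q → rsP (φ p) = rsP (φ q))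
    (hweak : ∀ p q, IsPermWord p → IsPermWord q → weakLe p q → weakLe (φ p) (φ q))
    {p q : List ℕ} (hp : IsPermWord p) (hq : IsPermWord q) (h : taskinLe (rsP p) (rsP q)) :
    taskinLe (rsP (φ p)) (rsP (φ q)) := by
  suffices ∀ T, taskinLe (rsP p) T → ∀ q, IsPermWord q → rsP q = T →
      taskinLe (rsP (φ p)) (rsP (φ q)) from this _ h q hq rfl
  intro T hT
  induction hT with
  | refl => exact fun q hq hqp => hrsP p q hp hq hqp.symm ▸ Relation.ReflTransGen.refl
  | tail _ step ih =>
    obtain ⟨a, b, ha, hb, rfl, rfl, hab⟩ := step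
    intro q hq hqb
    refine (ih a ha rfl).trans (Relation.ReflTransGen.single ?_)
    exact ⟨φ a, φ b, hperm a ha, hperm b hb, rfl, hrsP b q hb hq hqb.symm, hweak a b ha hb hab⟩

theorem taskinLe_triangle_left {u : List ℕ} (hu : IsPermWord u) {v v' : List ℕ}
    (hv : IsPermWord v) (hv' : IsPermWord v') (hlv : v.length = v'.length)
    (h : taskinLe (rsP v) (rsP v')) : taskinLe (rsP (triangle v u)) (rsP (triangle v' u)) := by
  have hpad := fun {c : List ℕ} (hc : IsPermWord c) => restrictPad_isPermWord hc.nodup v.length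
  have := taskinLe_lift (φ := fun c => triangle (restrictPad v.length c) u)
    (fun c hc => triangle_isPermWord (hpad hc).1 hu)
    (fun c d hc hd hcd => rsP_triangle_congr_left u (rsP_restrictPad_congr _ hc.nodup hd.nodup hcd))
    (fun c d hc hd hcd => weakLe_triangle (hpad hc).1 (hpad hd).1 hu hu
      ((hpad hc).2.trans (hpad hd).2.symm) rfl (weakLe_restrictPad hc hcd _) subset_rfl)
    hv hv' h
  rwa [restrictPad_length_self hv, hlv, restrictPad_length_self hv'] at this

theorem taskinLe_triangle_right {v : List ℕ} (hv : IsPermWord v) {u u' : List ℕ}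
    (hu : IsPermWord u) (hu' : IsPermWord u') (hlu : u.length = u'.length)
    (h : taskinLe (rsP u) (rsP u')) : taskinLe (rsP (triangle v u)) (rsP (triangle v u')) := by
  have hpad := fun {c : List ℕ} (hc : IsPermWord c) => restrictPad_isPermWord hc.nodup u.length
  have := taskinLe_lift (φ := fun c => triangle v (restrictPad u.length c))
    (fun c hc => triangle_isPermWord hv (hpad hc).1)
    (fun c d hc hd hcd => rsP_triangle_congr_right v (triangle_isPermWord hv (hpad hc).1).nodup
      (hpad hd).1.nodup (rsP_restrictPad_congr _ hc.nodup hd.nodup hcd))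
    (fun c d hc hd hcd => weakLe_triangle hv hv (hpad hc).1 (hpad hd).1 rfl
      ((hpad hc).2.trans (hpad hd).2.symm) subset_rfl (weakLe_restrictPad hc hcd _))
    hu hu' h
  rwa [restrictPad_length_self hu, hlu, restrictPad_length_self hu'] at this

/-- The Taskin weak order on tableaux is compatible with the
induced product `△`: if `U ≤ U'` and `V ≤ V'` then `V △ U ≤ V' △ U'`. -/
theorem taskin_triangle_mono (u u' v v' : List ℕ)
    (hu : IsPermWord u) (hu' : IsPermWord u') (hv : IsPermWord v) (hv' : IsPermWord v')
    (hlu : u.length = u'.length) (hlv : v.length = v'.length)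
    (hU : taskinLe (rsP u) (rsP u')) (hV : taskinLe (rsP v) (rsP v')) :
    taskinLe (rsP (triangle v u)) (rsP (triangle v' u')) :=
  (taskinLe_triangle_left hu hv hv' hlv hV).trans (taskinLe_triangle_right hv' hu hu' hlu hU)
end

section
/- If u ∼_plax u' (Knuth equivalent) in S_p, then for any v ∈ S_q, u □ v ∼_plax u' □ v and v □ u ∼_plax v □ u', so right shifted concatenation induces a well-defined product □ on standard tableaux (plactic classes). -/
lemma knuthStep_append_right {a b : List ℕ} (w : List ℕ) (h : KnuthStep a b) :
    KnuthStep (a ++ w) (b ++ w) := by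
  cases h with
  | k1 x y i j k h1 h2 =>
    simpa [List.append_assoc] using KnuthStep.k1 x (y ++ w) i j k h1 h2
  | k2 x y i j k h1 h2 =>
    simpa [List.append_assoc] using KnuthStep.k2 x (y ++ w) i j k h1 h2

lemma knuthStep_prepend {a b : List ℕ} (w : List ℕ) (h : KnuthStep a b) :
    KnuthStep (w ++ a) (w ++ b) := by
  cases h with
  | k1 x y i j k h1 h2 =>
    simpa [List.append_assoc] using KnuthStep.k1 (w ++ x) y i j k h1 h2
  | k2 x y i j k h1 h2 =>
    simpa [List.append_assoc] using KnuthStep.k2 (w ++ x) y i j k h1 h2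

lemma knuthStep_map_add {a b : List ℕ} (n : ℕ) (h : KnuthStep a b) :
    KnuthStep (a.map (· + n)) (b.map (· + n)) := by
  cases h with
  | k1 x y i j k h1 h2 =>
    simpa [List.map_append] using
      KnuthStep.k1 (x.map (· + n)) (y.map (· + n)) (i + n) (j + n) (k + n)
        (Nat.add_lt_add_right h1 n) (Nat.add_lt_add_right h2 n)
  | k2 x y i j k h1 h2 =>
    simpa [List.map_append] using
      KnuthStep.k2 (x.map (· + n)) (y.map (· + n)) (i + n) (j + n) (k + n)
        (Nat.add_lt_add_right h1 n) (Nat.add_lt_add_right h2 n)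

lemma plax_congr (f : List ℕ → List ℕ)
    (hf : ∀ a b, KnuthStep a b → KnuthStep (f a) (f b)) :
    ∀ {a b}, Plax a b → Plax (f a) (f b) := by
  intro a b h
  induction h with
  | rel a b h => exact Relation.EqvGen.rel _ _ (hf a b h)
  | refl a => exact Relation.EqvGen.refl _
  | symm a b _ ih => exact Relation.EqvGen.symm _ _ ih
  | trans a b c _ _ ih1 ih2 => exact Relation.EqvGen.trans _ _ _ ih1 ih2


lemma knuthStep_length {a b : List ℕ} (h : KnuthStep a b) : a.length = b.length := by
  cases h <;> simp

lemma plax_length {a b : List ℕ} (h : Plax a b) : a.length = b.length := by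
  induction h with
  | rel a b h => exact knuthStep_length h
  | refl a => rfl
  | symm a b _ ih => exact ih.symm
  | trans a b c _ _ ih1 ih2 => exact ih1.trans ih2

/-- Plactic equivalence is compatible with right shifted
concatenation in both arguments, so `□` induces a well-defined product on
standard tableaux (plactic classes). -/
theorem plax_compatible_squareC :
    (∀ u u' v : List ℕ, Plax u u' → Plax (squareC u v) (squareC u' v)) ∧
    (∀ u u' v : List ℕ, u.length = u'.length → Plax u u' →
      Plax (squareC v u) (squareC v u')) := by
  constructor
  · intro u u' v h
    have hl : u.length = u'.length := plax_length h
    unfold squareC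
    rw [← hl]
    exact plax_congr (fun a => a ++ v.map (· + u.length))
      (fun a b h => knuthStep_append_right _ h) h
  · intro u u' v hl h
    exact plax_congr (fun a => v ++ a.map (· + v.length))
      (fun a b h => knuthStep_prepend _ (knuthStep_map_add _ h)) h
end
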